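/- arXiv:2102.06987 — 12 statements merged into one kernel-verified Lean document; each statement's English description precedes it below -/
import Mathlib

section
/- For the sequence defined by x_0 = 1, x_1 = 0, and x_n = (1/h_0)(x_{n-2} - \sum_{i=1}^{n-1} h_{n-i} x_i) for n \geq 2, where h_k \geq 0, \sum_k h_k = 1, h_0 > 0, the even-indexed terms are nondecreasing and at least 1 (i.e., 1 \leq x_{2n} \leq x_{2n+2} for all n), and the odd-indexed terms are nonincreasing and at most 0 (i.e., x_{2n+3} \leq x_{2n+1} \leq 0 for all n). -/
noncomputable def Hb (h : ℕ → ℝ) (k : ℕ) : ℝ := 1 - ∑ j ∈ Finset.range (k+1), h j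

noncomputable def gam (h : ℕ → ℝ) (n : ℕ) : ℝ := ∑ k ∈ Finset.range (n+1), (-1)^k * Hb h k

noncomputable def th (h : ℕ → ℝ) : ℕ → ℝ
  | n => (1 / h 0) * ((if n = 0 then 1 else 0) +
      ∑ j ∈ (Finset.range n).attach, gam h (n - j.1) * th h j.1)
  termination_by n => n
  decreasing_by exact Finset.mem_range.mp j.2

noncomputable def yy (h : ℕ → ℝ) : ℕ → ℝ
  | 0 => 1
  | 1 => 0
  | (n+2) => yy h n + (-1)^n * (th h n - if n = 0 then 1 else 0)

section lemmas

variable (h : ℕ → ℝ)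

lemma th_eq (n : ℕ) : th h n = (1 / h 0) * ((if n = 0 then 1 else 0) +
    ∑ j ∈ Finset.range n, gam h (n - j) * th h j) := by
  rw [th]
  congr 1
  congr 1
  exact Finset.sum_attach (Finset.range n) (fun t => gam h (n - t) * th h t)

lemma Hb_succ (k : ℕ) : Hb h (k+1) = Hb h k - h (k+1) := by
  simp [Hb, Finset.sum_range_succ]; ring

lemma gam_zero : gam h 0 = 1 - h 0 := by
  simp [gam, Hb]

lemma gam_succ (n : ℕ) : gam h (n+1) = gam h n + (-1)^(n+1) * Hb h (n+1) := by
  simp [gam, Finset.sum_range_succ]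

lemma negpow (k : ℕ) : (-1:ℝ)^k * h k =
    (if k = 0 then 1 else 0) + (if 2 ≤ k then gam h (k-2) else 0) - gam h k := by
  match k with
  | 0 => simp [gam_zero]
  | 1 =>
    have h1 : gam h 1 = h 1 := by
      rw [gam_succ, gam_zero, Hb_succ]
      simp [Hb]
      try ring
    simp [h1]
  | (m+2) =>
    have e1 := gam_succ h (m+1)
    have e2 := gam_succ h m
    have e3 := Hb_succ h (m+1)
    have hp1 : ((-1:ℝ))^(m+1) = (-1)^m * (-1) := by rw [pow_succ]
    have hp2 : ((-1:ℝ))^(m+2) = (-1)^m := by rw [pow_succ, pow_succ]; ring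
    have : gam h (m+2) = gam h m + (-1)^(m+1) * Hb h (m+1) + (-1)^(m+2) * Hb h (m+2) := by
      rw [e1, e2]
    rw [this, e3, hp1, hp2]
    simp [Nat.succ_sub_succ]
    ring

lemma sum_gam (h0 : 0 < h 0) (n : ℕ) :
    ∑ j ∈ Finset.range (n+1), gam h (n-j) * th h j = th h n - (if n = 0 then 1 else 0) := by
  have h0' : h 0 ≠ 0 := ne_of_gt h0
  have e : h 0 * th h n = (if n = 0 then 1 else 0) +
      ∑ j ∈ Finset.range n, gam h (n - j) * th h j := by
    rw [th_eq]; field_simp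
  rw [Finset.sum_range_succ]
  have hnn : n - n = 0 := Nat.sub_self n
  rw [hnn, gam_zero]
  have : ∑ j ∈ Finset.range n, gam h (n - j) * th h j
      = h 0 * th h n - (if n = 0 then 1 else 0) := by linarith [e]
  rw [this]; ring

lemma L9R (h0 : 0 < h 0) (m : ℕ) :
    ∑ j ∈ Finset.range (m+3), (-1:ℝ)^j * h (m+2-j) * th h j
      = (-1)^m * (th h m - if m = 0 then 1 else 0) := by
  have key : ∀ j ∈ Finset.range (m+3),
      (-1:ℝ)^j * h (m+2-j) * th h j
        = (-1:ℝ)^m * (((if j = m+2 then th h j else 0)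
            + (if j < m+1 then gam h (m-j) * th h j else 0))
            - gam h (m+2-j) * th h j) := by
    intro j hj
    have hj' : j < m + 3 := Finset.mem_range.mp hj
    have hsign : (-1:ℝ)^j = (-1)^m * (-1)^(m+2-j) := by
      have e1 : (-1:ℝ)^(m+2-j) * (-1)^(m+2-j) = 1 := by
        rw [← pow_add]
        exact Even.neg_one_pow ⟨m+2-j, rfl⟩
      have e2 : (-1:ℝ)^(m+2-j) * (-1)^j = (-1)^(m+2) := by
        rw [← pow_add]; congr 1; omega
      have e3 : ((-1:ℝ))^(m+2) = (-1)^m := by rw [pow_succ, pow_succ]; ring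
      calc (-1:ℝ)^j = ((-1)^(m+2-j) * (-1)^(m+2-j)) * (-1)^j := by rw [e1]; ring
        _ = (-1)^(m+2-j) * ((-1)^(m+2-j) * (-1)^j) := by ring
        _ = (-1)^(m+2-j) * (-1)^m := by rw [e2, e3]
        _ = (-1)^m * (-1)^(m+2-j) := by ring
    have hnp := negpow h (m+2-j)
    have hsub : m+2-j-2 = m-j := by omega
    rw [hsub] at hnp
    have expand : ((if m+2-j = 0 then (1:ℝ) else 0) + (if 2 ≤ m+2-j then gam h (m-j) else 0)
          - gam h (m+2-j)) * th h j
        = ((if j = m+2 then th h j else 0) + (if j < m+1 then gam h (m-j) * th h j else 0))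
            - gam h (m+2-j) * th h j := by
      have c1 : (m+2-j = 0) ↔ (j = m+2) := by omega
      have c2 : (2 ≤ m+2-j) ↔ (j < m+1) := by omega
      simp only [c1, c2]
      split_ifs with ha hb hb
      · omega
      · ring
      · ring
      · ring
    calc (-1:ℝ)^j * h (m+2-j) * th h j
        = (-1)^m * (((-1)^(m+2-j) * h (m+2-j)) * th h j) := by rw [hsign]; ring
      _ = (-1)^m * (((if m+2-j = 0 then (1:ℝ) else 0) + (if 2 ≤ m+2-j then gam h (m-j) else 0)
            - gam h (m+2-j)) * th h j) := by rw [hnp]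
      _ = _ := by rw [expand]
  rw [Finset.sum_congr rfl key, ← Finset.mul_sum]
  congr 1
  rw [Finset.sum_sub_distrib, Finset.sum_add_distrib]
  have s1 : ∑ j ∈ Finset.range (m+3), (if j = m+2 then th h j else 0) = th h (m+2) := by
    rw [Finset.sum_ite_eq' (Finset.range (m+3)) (m+2) (th h)]
    simp
  have s2 : ∑ j ∈ Finset.range (m+3), (if j < m+1 then gam h (m-j) * th h j else 0)
      = th h m - (if m = 0 then 1 else 0) := by
    rw [← sum_gam h h0 m]
    rw [← Finset.sum_subset (Finset.range_subset_range.mpr (by omega : m+1 ≤ m+3))]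
    · apply Finset.sum_congr rfl
      intro j hj
      have : j < m + 1 := Finset.mem_range.mp hj
      simp [this]
    · intro j _ hj
      have : ¬ (j < m+1) := fun hc => hj (Finset.mem_range.mpr hc)
      simp [this]
  have s3 : ∑ j ∈ Finset.range (m+3), gam h (m+2-j) * th h j
      = th h (m+2) := by
    have := sum_gam h h0 (m+2)
    simpa using this
  rw [s1, s2, s3]
  ring

lemma yy_step (n : ℕ) : yy h (n+2) = yy h n + (-1)^n * (th h n - if n = 0 then 1 else 0) := by
  rfl

lemma Tstep (n : ℕ) :
    ∑ k ∈ Finset.range (n+4), h (n+3-k) * yy h (k+1)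
      = (∑ k ∈ Finset.range (n+2), h (n+1-k) * yy h (k+1))
        + ∑ j ∈ Finset.range (n+3), (-1:ℝ)^j * h (n+2-j) * th h j := by
  rw [Finset.sum_range_succ' (fun k => h (n+3-k) * yy h (k+1)) (n+3)]
  have e1 : ∀ k, h (n+3-(k+1)) * yy h (k+1+1) = h (n+2-k) * yy h (k+2) := by
    intro k; congr 2 <;> omega
  simp only [e1]
  have e2 : ∀ k, h (n+2-k) * yy h (k+2)
      = h (n+2-k) * yy h k + (-1:ℝ)^k * h (n+2-k) * th h k
        - (if k = 0 then h (n+2) * (1:ℝ) else 0) := by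
    intro k
    rw [yy_step]
    split_ifs with hk
    · subst hk; simp; ring
    · simp [hk]; ring
  simp only [e2]
  rw [Finset.sum_sub_distrib, Finset.sum_add_distrib]
  have s0 : ∑ k ∈ Finset.range (n+3), (if k = 0 then h (n+2) * (1:ℝ) else 0) = h (n+2) := by
    rw [Finset.sum_ite_eq' (Finset.range (n+3)) 0 (fun _ => h (n+2) * (1:ℝ))]
    simp
  have s1 : ∑ k ∈ Finset.range (n+3), h (n+2-k) * yy h k
      = (∑ k ∈ Finset.range (n+2), h (n+1-k) * yy h (k+1)) + h (n+2) := by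
    rw [Finset.sum_range_succ' (fun k => h (n+2-k) * yy h k) (n+2)]
    have e3 : ∀ k, h (n+2-(k+1)) * yy h (k+1) = h (n+1-k) * yy h (k+1) := by
      intro k; congr 2; omega
    simp only [e3]
    have : yy h 0 = 1 := rfl
    rw [this]
    simp
  rw [s0, s1]
  have : yy h 1 = 0 := rfl
  rw [this]
  ring

lemma th_zero : th h 0 = 1 / h 0 := by
  rw [th_eq]; simp

lemma Sy (h0 : 0 < h 0) : ∀ n, ∑ k ∈ Finset.range (n+2), h (n+1-k) * yy h (k+1) = yy h n := by
  have h0' : h 0 ≠ 0 := ne_of_gt h0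
  have base0 : ∑ k ∈ Finset.range 2, h (1-k) * yy h (k+1) = yy h 0 := by
    have hy1 : yy h 1 = 0 := rfl
    have hy2 : yy h 2 = th h 0 := by
      rw [yy_step]; simp [yy]
    have hy0 : yy h 0 = 1 := rfl
    rw [Finset.sum_range_succ, Finset.sum_range_succ]
    simp [hy0, hy1, hy2, th_zero]
    field_simp
  have base1 : ∑ k ∈ Finset.range 3, h (2-k) * yy h (k+1) = yy h 1 := by
    have hy1 : yy h 1 = 0 := rfl
    have hy2 : yy h 2 = th h 0 := by rw [yy_step]; simp [yy]
    have hy3 : yy h 3 = -th h 1 := by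
      rw [show (3:ℕ) = 1 + 2 from rfl, yy_step]
      simp [yy]
    have hth1 : th h 1 = (1/h 0) * (gam h 1 * th h 0) := by
      rw [th_eq]; simp
    have hg1 : gam h 1 = h 1 := by
      rw [gam_succ, gam_zero, Hb_succ]
      simp [Hb]
      try ring
    rw [Finset.sum_range_succ, Finset.sum_range_succ, Finset.sum_range_succ]
    rw [hy1, hy2, hy3, hth1, hg1, th_zero]
    simp
    field_simp
    ring
  have key : ∀ n, (∑ k ∈ Finset.range (n+2), h (n+1-k) * yy h (k+1) = yy h n)
      ∧ (∑ k ∈ Finset.range (n+3), h (n+2-k) * yy h (k+1) = yy h (n+1)) := by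
    intro n
    induction n with
    | zero => exact ⟨base0, base1⟩
    | succ m ih =>
      refine ⟨ih.2, ?_⟩
      have := Tstep h m
      rw [show m+1+3 = m+4 from rfl, show m+1+2 = m+3 from rfl, this, ih.1, L9R h h0 m]
      rw [yy_step]
  exact fun n => (key n).1

lemma x_eq_yy (hnn : ∀ k, 0 ≤ h k) (h0 : 0 < h 0) (x : ℕ → ℝ)
    (hx0 : x 0 = 1) (hx1 : x 1 = 0)
    (hrec : ∀ n, 2 ≤ n →
      x n = (1 / h 0) * (x (n - 2) - ∑ i ∈ Finset.Icc 1 (n - 1), h (n - i) * x i)) :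
    ∀ n, x n = yy h n := by
  have h0' : h 0 ≠ 0 := ne_of_gt h0
  intro n
  induction n using Nat.strong_induction_on with
  | _ n ih =>
    match n with
    | 0 => exact hx0
    | 1 => exact hx1
    | (m+2) =>
      have hr := hrec (m+2) (by omega)
      have hs1 : m+2-2 = m := by omega
      have hs2 : m+2-1 = m+1 := by omega
      rw [hs1, hs2] at hr
      have hicc : ∑ i ∈ Finset.Icc 1 (m+1), h (m+2-i) * x i
          = ∑ k ∈ Finset.range (m+1), h (m+1-k) * x (k+1) := by
        rw [show Finset.Icc 1 (m+1) = Finset.Ico 1 (m+2) from (Finset.Ico_add_one_right_eq_Icc (a := 1) (b := m+1)).symm,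
          Finset.sum_Ico_eq_sum_range]
        apply Finset.sum_congr (by congr 1)
        intro k _
        congr 2 <;> omega
      rw [hicc] at hr
      have hxy : ∀ k ∈ Finset.range (m+1), h (m+1-k) * x (k+1) = h (m+1-k) * yy h (k+1) := by
        intro k hk
        have : k + 1 < m + 2 := by have := Finset.mem_range.mp hk; omega
        rw [ih (k+1) this]
      rw [Finset.sum_congr rfl hxy, ih m (by omega)] at hr
      have hSy := Sy h h0 m
      rw [Finset.sum_range_succ] at hSy
      have hlast : m+1-(m+1) = 0 := by omega
      rw [hlast] at hSy
      have : ∑ k ∈ Finset.range (m+1), h (m+1-k) * yy h (k+1)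
          = yy h m - h 0 * yy h (m+2) := by linarith [hSy]
      rw [this] at hr
      rw [hr]; field_simp; ring

lemma Hb_nonneg (hnn : ∀ k, 0 ≤ h k) (hsum : HasSum h 1) (k : ℕ) : 0 ≤ Hb h k := by
  have := sum_le_hasSum (Finset.range (k+1)) (fun i _ => hnn i) hsum
  simp [Hb]; linarith

lemma gam_nonneg (hnn : ∀ k, 0 ≤ h k) (hsum : HasSum h 1) (n : ℕ) : 0 ≤ gam h n := by
  have aux : ∀ m, Hb h (2*m) ≤ gam h (2*m) ∧ 0 ≤ gam h (2*m+1) := by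
    intro m
    induction m with
    | zero =>
      constructor
      · rw [gam_zero]; simp [Hb]
      · have : gam h 1 = h 1 := by
          rw [gam_succ, gam_zero, Hb_succ]; simp [Hb]; try ring
        rw [this]; exact hnn 1
    | succ k ih =>
      have hA : Hb h (2*(k+1)) ≤ gam h (2*(k+1)) := by
        have e : gam h (2*k+2) = gam h (2*k+1) + (-1:ℝ)^(2*k+2) * Hb h (2*k+2) := gam_succ h (2*k+1)
        have hp : ((-1:ℝ))^(2*k+2) = 1 := Even.neg_one_pow ⟨k+1, by ring⟩
        rw [hp, one_mul] at e
        have h2 : 2*(k+1) = 2*k+2 := by ring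
        rw [h2, e]
        linarith [ih.2]
      refine ⟨hA, ?_⟩
      have e : gam h (2*(k+1)+1) = gam h (2*(k+1)) + (-1:ℝ)^(2*(k+1)+1) * Hb h (2*(k+1)+1) :=
        gam_succ h (2*(k+1))
      have hp : ((-1:ℝ))^(2*(k+1)+1) = -1 := Odd.neg_one_pow ⟨k+1, by ring⟩
      rw [hp] at e
      have hHb : Hb h (2*(k+1)+1) = Hb h (2*(k+1)) - h (2*(k+1)+1) := Hb_succ h (2*(k+1))
      rw [e, hHb]
      have := hnn (2*(k+1)+1)
      linarith [hA]
  rcases Nat.even_or_odd n with he | ho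
  · obtain ⟨m, hm⟩ := he
    have : n = 2*m := by omega
    subst this
    exact le_trans (Hb_nonneg h hnn hsum (2*m)) (aux m).1
  · obtain ⟨m, hm⟩ := ho
    subst hm
    exact (aux m).2

lemma th_nonneg (hnn : ∀ k, 0 ≤ h k) (hsum : HasSum h 1) (h0 : 0 < h 0) (n : ℕ) :
    0 ≤ th h n := by
  induction n using Nat.strong_induction_on with
  | _ n ih =>
    rw [th_eq]
    apply mul_nonneg
    · positivity
    · apply add_nonneg
      · split <;> norm_num
      · apply Finset.sum_nonneg
        intro j hj
        exact mul_nonneg (gam_nonneg h hnn hsum (n-j)) (ih j (Finset.mem_range.mp hj))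

end lemmas

theorem stmt_0 (h : ℕ → ℝ) (hnn : ∀ k, 0 ≤ h k) (hsum : HasSum h 1)
    (h0 : 0 < h 0) (x : ℕ → ℝ) (hx0 : x 0 = 1) (hx1 : x 1 = 0)
    (hrec : ∀ n, 2 ≤ n →
      x n = (1 / h 0) * (x (n - 2) - ∑ i ∈ Finset.Icc 1 (n - 1), h (n - i) * x i)) :
    ∀ n : ℕ, (1 ≤ x (2 * n) ∧ x (2 * n) ≤ x (2 * n + 2)) ∧
      (x (2 * n + 3) ≤ x (2 * n + 1) ∧ x (2 * n + 1) ≤ 0) := by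
  have hxy := x_eq_yy h hnn h0 x hx0 hx1 hrec
  have hth := th_nonneg h hnn hsum h0
  have h0le1 : h 0 ≤ 1 := by
    have := Hb_nonneg h hnn hsum 0
    simp [Hb] at this
    linarith
  have step_even : ∀ n, yy h (2*n) ≤ yy h (2*n+2) := by
    intro n
    have e := yy_step h (2*n)
    rcases n with _ | k
    · simp at e
      rw [e, th_zero]
      have hinv : (1:ℝ) ≤ (h 0)⁻¹ := by
        rw [← one_div, le_div_iff₀ h0]; linarith
      simp [yy]
      linarith
    · have hne : 2*(k+1) ≠ 0 := by omega
      rw [e]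
      have hp : ((-1:ℝ))^(2*(k+1)) = 1 := Even.neg_one_pow ⟨k+1, by ring⟩
      simp [hne, hp]
      exact hth (2*(k+1))
  have step_odd : ∀ n, yy h (2*n+3) ≤ yy h (2*n+1) := by
    intro n
    have e := yy_step h (2*n+1)
    have h23 : 2*n+3 = (2*n+1)+2 := by omega
    rw [h23, e]
    have hne : 2*n+1 ≠ 0 := by omega
    have hp : ((-1:ℝ))^(2*n+1) = -1 := Odd.neg_one_pow ⟨n, by ring⟩
    simp [hne, hp]
    exact hth (2*n+1)
  have key : ∀ n, 1 ≤ yy h (2*n) ∧ yy h (2*n+1) ≤ 0 := by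
    intro n
    induction n with
    | zero => constructor <;> simp [yy]
    | succ k ih =>
      constructor
      · have : 2*(k+1) = 2*k+2 := by ring
        rw [this]
        exact le_trans ih.1 (step_even k)
      · have : 2*(k+1)+1 = 2*k+3 := by ring
        rw [this]
        exact le_trans (step_odd k) ih.2
  intro n
  rw [hxy (2*n), hxy (2*n+2), hxy (2*n+3), hxy (2*n+1)]
  exact ⟨⟨(key n).1, step_even n⟩, ⟨step_odd n, (key n).2⟩⟩
end

section
/- With sequences x_n and y_n defined by the same recurrence x_n = (1/h_0)(x_{n-2} - \sum_{i=1}^{n-1} h_{n-i} x_i) but initial values x_0=1, x_1=0 and y_0=0, y_1=1 respectively, one has y_n = h_0 x_{n+1} for all n \geq 0. -/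
/-!
Both `y` and `n ↦ h₀ x_{n+1}` solve the recurrence: for the shifted sequence, the term
`h_n x₁` of the sum vanishes because `x₁ = 0`, and the remaining terms are the sum of the
recurrence at index `n` reindexed by one. They share the initial values `y₀ = 0 = h₀ x₁` and
`y₁ = 1 = h₀ x₂`, and a solution is determined by its first two values.
-/

open Finset

theorem Finset.sum_Icc_succ_eq_add_sum_shift {M : Type*} [AddCommMonoid M] (f : ℕ → M)
    {a b : ℕ} (hab : a ≤ b + 1) :
    ∑ i ∈ Icc a (b + 1), f i = f a + ∑ j ∈ Icc a b, f (j + 1) := by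
  rw [← add_sum_Ioc_eq_sum_Icc hab, ← Icc_add_one_left_eq_Ioc, ← map_add_right_Icc, sum_map]
  rfl

section Recurrence

variable {K : Type*} [Field K] {h x y : ℕ → K}

def SatisfiesRecurrence (h x : ℕ → K) : Prop :=
  ∀ n, 2 ≤ n → x n = (1 / h 0) * (x (n - 2) - ∑ i ∈ Icc 1 (n - 1), h (n - i) * x i)

theorem SatisfiesRecurrence.eq_of_eq_at_zero_one (hx : SatisfiesRecurrence h x)
    (hy : SatisfiesRecurrence h y) (h₀ : x 0 = y 0) (h₁ : x 1 = y 1) : x = y := by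
  funext n
  induction n using Nat.strong_induction_on with
  | _ n ih =>
    match n with
    | 0 => exact h₀
    | 1 => exact h₁
    | m + 2 =>
      rw [hx _ le_add_self, hy _ le_add_self, Nat.add_sub_cancel, ih m (by omega)]
      congr 2
      refine sum_congr rfl fun i hi ↦ ?_
      rw [ih i (by grind)]

theorem SatisfiesRecurrence.const_mul_shift (hx : SatisfiesRecurrence h x) (hx₁ : x 1 = 0)
    (c : K) : SatisfiesRecurrence h (fun n ↦ c * x (n + 1)) := by
  rintro n hn
  obtain ⟨m, rfl⟩ := Nat.exists_eq_add_of_le' hn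
  have hsum : ∑ i ∈ Icc 1 (m + 2), h (m + 3 - i) * x i
      = ∑ j ∈ Icc 1 (m + 1), h (m + 2 - j) * x (j + 1) := by
    rw [sum_Icc_succ_eq_add_sum_shift _ (by omega), hx₁, mul_zero, zero_add]
    exact sum_congr rfl fun j _ ↦ by rw [show m + 3 - (j + 1) = m + 2 - j by omega]
  have hrec := hx (m + 3) (by omega)
  simp only [show m + 3 - 2 = m + 1 by omega, show m + 3 - 1 = m + 2 by omega, hsum] at hrec
  simp only [Nat.add_sub_cancel, show m + 2 - 1 = m + 1 by omega, hrec, mul_left_comm _ c,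
    ← mul_sum]
  ring

end Recurrence

theorem stmt_1_general (h : ℕ → ℝ)
    (h0 : 0 < h 0) (x y : ℕ → ℝ) (hx0 : x 0 = 1) (hx1 : x 1 = 0)
    (hy0 : y 0 = 0) (hy1 : y 1 = 1)
    (hxrec : ∀ n, 2 ≤ n →
      x n = (1 / h 0) * (x (n - 2) - ∑ i ∈ Finset.Icc 1 (n - 1), h (n - i) * x i))
    (hyrec : ∀ n, 2 ≤ n →
      y n = (1 / h 0) * (y (n - 2) - ∑ i ∈ Finset.Icc 1 (n - 1), h (n - i) * y i)) :
    ∀ n : ℕ, y n = h 0 * x (n + 1) := by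
  have hx : SatisfiesRecurrence h x := hxrec
  have hy : SatisfiesRecurrence h y := hyrec
  have hx2 : x 2 = 1 / h 0 := by simpa [hx0, hx1] using hx 2 le_rfl
  refine congrFun (hy.eq_of_eq_at_zero_one (hx.const_mul_shift hx1 (h 0)) ?_ ?_)
  · simp [hy0, hx1]
  · rw [hy1, hx2, mul_one_div_cancel h0.ne']

theorem stmt_1 (h : ℕ → ℝ) (hnn : ∀ k, 0 ≤ h k) (hsum : HasSum h 1)
    (h0 : 0 < h 0) (x y : ℕ → ℝ) (hx0 : x 0 = 1) (hx1 : x 1 = 0)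
    (hy0 : y 0 = 0) (hy1 : y 1 = 1)
    (hxrec : ∀ n, 2 ≤ n →
      x n = (1 / h 0) * (x (n - 2) - ∑ i ∈ Finset.Icc 1 (n - 1), h (n - i) * x i))
    (hyrec : ∀ n, 2 ≤ n →
      y n = (1 / h 0) * (y (n - 2) - ∑ i ∈ Finset.Icc 1 (n - 1), h (n - i) * y i)) :
    ∀ n : ℕ, y n = h 0 * x (n + 1) :=
  stmt_1_general h h0 x y hx0 hx1 hy0 hy1 hxrec hyrec
end

section
/- The determinant D_n = x_n y_{n+1} - x_{n+1} y_n equals h_0 (x_n x_{n+2} - x_{n+1}^2) for every n \geq 0. -/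
/-! Since `x 1 = 0`, the term `i = 1` drops out of the recurrence for `x (n + 1)`, so the shifted
sequence `n ↦ x (n + 1)` solves the same recurrence. Comparing initial values gives
`y n = h 0 * x (n + 1)`, and the identity for `D n` is then a rearrangement. -/

open Finset

def SolvesRecurrence (h z : ℕ → ℝ) : Prop :=
  ∀ n, 2 ≤ n → z n = (1 / h 0) * (z (n - 2) - ∑ i ∈ Icc 1 (n - 1), h (n - i) * z i)

namespace SolvesRecurrence

variable {h z w : ℕ → ℝ}

theorem unique (hz : SolvesRecurrence h z) (hw : SolvesRecurrence h w) (h0 : z 0 = w 0)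
    (h1 : z 1 = w 1) : z = w := by
  funext n
  induction n using Nat.strong_induction_on with
  | _ n ih =>
    match n, ih with
    | 0, _ => exact h0
    | 1, _ => exact h1
    | n + 2, ih =>
      rw [hz _ (by omega), hw _ (by omega), Nat.add_sub_cancel, ih n (by omega)]
      congr 2
      refine sum_congr rfl fun i hi => ?_
      rw [ih i (by rw [mem_Icc] at hi; omega)]

theorem const_mul (hz : SolvesRecurrence h z) (c : ℝ) :
    SolvesRecurrence h (fun n => c * z n) := by
  intro n hn
  dsimp only
  rw [hz n hn]
  simp only [mul_left_comm _ c, ← mul_sum]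
  ring

theorem shift (hz : SolvesRecurrence h z) (hz1 : z 1 = 0) :
    SolvesRecurrence h (fun n => z (n + 1)) := by
  intro n hn
  obtain ⟨m, rfl⟩ : ∃ m, n = m + 2 := ⟨n - 2, by omega⟩
  have hsum : ∑ i ∈ Icc 1 (m + 2), h (m + 3 - i) * z i
      = ∑ i ∈ Icc 1 (m + 1), h (m + 2 - i) * z (i + 1) := by
    rw [← add_sum_Ioc_eq_sum_Icc (by omega), hz1, mul_zero, zero_add, ← Icc_add_one_left_eq_Ioc,
      ← map_add_right_Icc 1 (m + 1) 1, sum_map]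
    refine sum_congr rfl fun i _ => ?_
    simp only [addRightEmbedding_apply]
    congr 2
    omega
  simpa [hsum] using hz (m + 3) (by omega)

end SolvesRecurrence

theorem stmt_2_general (h : ℕ → ℝ)
    (h0 : 0 < h 0) (x y : ℕ → ℝ) (hx0 : x 0 = 1) (hx1 : x 1 = 0)
    (hy0 : y 0 = 0) (hy1 : y 1 = 1)
    (hxrec : ∀ n, 2 ≤ n →
      x n = (1 / h 0) * (x (n - 2) - ∑ i ∈ Finset.Icc 1 (n - 1), h (n - i) * x i))
    (hyrec : ∀ n, 2 ≤ n →
      y n = (1 / h 0) * (y (n - 2) - ∑ i ∈ Finset.Icc 1 (n - 1), h (n - i) * y i))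
    (D : ℕ → ℝ) (hD : ∀ n, D n = x n * y (n + 1) - x (n + 1) * y n) :
    ∀ n : ℕ, D n = h 0 * (x n * x (n + 2) - (x (n + 1)) ^ 2) := by
  have hx2 : x 2 = 1 / h 0 := by simpa [hx0, hx1] using hxrec 2 le_rfl
  have hy : y = fun n => h 0 * x (n + 1) := by
    refine SolvesRecurrence.unique hyrec ((SolvesRecurrence.shift hxrec hx1).const_mul (h 0)) ?_ ?_
    · simp [hy0, hx1]
    · simp [hy1, hx2, h0.ne']
  intro n
  rw [hD, hy]
  ring

theorem stmt_2 (h : ℕ → ℝ) (hnn : ∀ k, 0 ≤ h k) (hsum : HasSum h 1)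
    (h0 : 0 < h 0) (x y : ℕ → ℝ) (hx0 : x 0 = 1) (hx1 : x 1 = 0)
    (hy0 : y 0 = 0) (hy1 : y 1 = 1)
    (hxrec : ∀ n, 2 ≤ n →
      x n = (1 / h 0) * (x (n - 2) - ∑ i ∈ Finset.Icc 1 (n - 1), h (n - i) * x i))
    (hyrec : ∀ n, 2 ≤ n →
      y n = (1 / h 0) * (y (n - 2) - ∑ i ∈ Finset.Icc 1 (n - 1), h (n - i) * y i))
    (D : ℕ → ℝ) (hD : ∀ n, D n = x n * y (n + 1) - x (n + 1) * y n) :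
    ∀ n : ℕ, D n = h 0 * (x n * x (n + 2) - (x (n + 1)) ^ 2) :=
  stmt_2_general h h0 x y hx0 hx1 hy0 hy1 hxrec hyrec D hD
end

section
/- If h_{2k+1} = 0 for all k \geq 0 (the claim distribution is supported on even integers), then x_{2n+1} = 0 for all n, and consequently D_{2n} = h_0 x_{2n} x_{2n+2} \geq 1 is nondecreasing in n, while D_{2n+1} = -h_0 x_{2n+2}^2 \leq -1 is nonincreasing in n. -/
open Finset

lemma sumOdd (F : ℕ → ℝ) (n : ℕ) (hF : ∀ m, 1 ≤ 2*m → 2*m ≤ 2*n → F (2*m) = 0) :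
    ∑ i ∈ Icc 1 (2*n), F i = ∑ j ∈ range n, F (2*j+1) := by
  induction n with
  | zero => simp
  | succ n ih =>
    have h1 : 2*(n+1) = (2*n+1)+1 := by ring
    rw [h1, Finset.sum_Icc_succ_top (by omega), show 2*n+1 = (2*n)+1 from rfl,
      Finset.sum_Icc_succ_top (by omega), ih (fun m h1 h2 => hF m h1 (by omega)),
      show (2*n+1)+1 = 2*(n+1) from by ring,
      hF (n+1) (by omega) (by omega), Finset.sum_range_succ]
    ring

lemma sumEven (F : ℕ → ℝ) (n : ℕ) (hF : ∀ m, 2*m+1 ≤ 2*n+1 → F (2*m+1) = 0) :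
    ∑ i ∈ Icc 1 (2*n+1), F i = ∑ j ∈ range n, F (2*j+2) := by
  induction n with
  | zero => simpa using hF 0 (by omega)
  | succ n ih =>
    have h1 : 2*(n+1)+1 = ((2*n+1)+1)+1 := by ring
    rw [h1, Finset.sum_Icc_succ_top (by omega), Finset.sum_Icc_succ_top (by omega),
      ih (fun m h2 => hF m (by omega)), show (2*n+1)+1+1 = 2*(n+1)+1 from by ring,
      hF (n+1) (by omega), Finset.sum_range_succ, show (2*n+1)+1 = 2*n+2 from rfl]
    ring

theorem stmt_3 (h : ℕ → ℝ) (hnn : ∀ k, 0 ≤ h k) (hsum : HasSum h 1)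
    (h0 : 0 < h 0) (hodd : ∀ k : ℕ, h (2 * k + 1) = 0)
    (x y : ℕ → ℝ) (hx0 : x 0 = 1) (hx1 : x 1 = 0)
    (hy0 : y 0 = 0) (hy1 : y 1 = 1)
    (hxrec : ∀ n, 2 ≤ n →
      x n = (1 / h 0) * (x (n - 2) - ∑ i ∈ Finset.Icc 1 (n - 1), h (n - i) * x i))
    (hyrec : ∀ n, 2 ≤ n →
      y n = (1 / h 0) * (y (n - 2) - ∑ i ∈ Finset.Icc 1 (n - 1), h (n - i) * y i))
    (D : ℕ → ℝ) (hD : ∀ n, D n = x n * y (n + 1) - x (n + 1) * y n) :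
    ∀ n : ℕ, x (2 * n + 1) = 0 ∧
      D (2 * n) = h 0 * (x (2 * n) * x (2 * n + 2)) ∧
      1 ≤ D (2 * n) ∧ D (2 * n) ≤ D (2 * n + 2) ∧
      D (2 * n + 1) = -(h 0 * (x (2 * n + 2)) ^ 2) ∧
      D (2 * n + 1) ≤ -1 ∧ D (2 * n + 3) ≤ D (2 * n + 1) := by
  have hh0 : h 0 ≠ 0 := ne_of_gt h0
  -- x vanishes at odd indices
  have hxodd : ∀ n, x (2*n+1) = 0 := by
    intro n
    induction n using Nat.strong_induction_on with
    | _ n ih =>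
      match n with
      | 0 => exact hx1
      | (m+1) =>
        have hrec := hxrec (2*(m+1)+1) (by omega)
        rw [show 2*(m+1)+1-2 = 2*m+1 from by omega,
          show 2*(m+1)+1-1 = 2*(m+1) from by omega] at hrec
        rw [sumOdd (fun i => h (2*(m+1)+1-i) * x i) (m+1)
          (by
            intro k h1 h2
            show h (2*(m+1)+1-2*k) * x (2*k) = 0
            rw [show 2*(m+1)+1-2*k = 2*((m+1)-k)+1 from by omega, hodd]
            ring)] at hrec
        rw [hrec, ih m (by omega), Finset.sum_eq_zero (fun j hj => by
          rw [ih j (by simp at hj; omega)]; ring)]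
        ring
  -- y vanishes at even indices
  have hyeven : ∀ n, y (2*n) = 0 := by
    intro n
    induction n using Nat.strong_induction_on with
    | _ n ih =>
      match n with
      | 0 => exact hy0
      | (m+1) =>
        have hrec := hyrec (2*(m+1)) (by omega)
        rw [show 2*(m+1)-2 = 2*m from by omega,
          show 2*(m+1)-1 = 2*m+1 from by omega] at hrec
        rw [sumEven (fun i => h (2*(m+1)-i) * y i) m
          (by
            intro k h1
            show h (2*(m+1)-(2*k+1)) * y (2*k+1) = 0
            rw [show 2*(m+1)-(2*k+1) = 2*(m-k)+1 from by omega, hodd]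
            ring)] at hrec
        rw [hrec, ih m (by omega), Finset.sum_eq_zero (fun j hj => by
          rw [show 2*j+2 = 2*(j+1) from by ring, ih (j+1) (by simp at hj; omega)]; ring)]
        ring
  -- recurrence for even-indexed x
  have hurec : ∀ n, h 0 * x (2*n+2) = x (2*n) - ∑ j ∈ range n, h (2*(n-j)) * x (2*j+2) := by
    intro n
    have hrec := hxrec (2*n+2) (by omega)
    rw [show 2*n+2-2 = 2*n from by omega, show 2*n+2-1 = 2*n+1 from by omega] at hrec
    rw [sumEven (fun i => h (2*n+2-i) * x i) n
      (by intro k h1; show h (2*n+2-(2*k+1)) * x (2*k+1) = 0; rw [hxodd k]; ring)] at hrec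
    rw [hrec, Finset.sum_congr rfl (fun j hj => by
      rw [show 2*n+2-(2*j+2) = 2*(n-j) from by omega])]
    field_simp
  -- recurrence for odd-indexed y
  have hvrec : ∀ n, h 0 * y (2*n+3)
      = y (2*n+1) - ∑ j ∈ range (n+1), h (2*((n+1)-j)) * y (2*j+1) := by
    intro n
    have hrec := hyrec (2*n+3) (by omega)
    rw [show 2*n+3-2 = 2*n+1 from by omega, show 2*n+3-1 = 2*(n+1) from by omega] at hrec
    rw [sumOdd (fun i => h (2*n+3-i) * y i) (n+1)
      (by intro k h1 h2; show h (2*n+3-2*k) * y (2*k) = 0; rw [hyeven k]; ring)] at hrec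
    rw [hrec, Finset.sum_congr rfl (fun j hj => by
      rw [show 2*n+3-(2*j+1) = 2*((n+1)-j) from by omega])]
    field_simp
  -- y (2n+1) = h0 * x (2n+2)
  have hxy : ∀ n, y (2*n+1) = h 0 * x (2*n+2) := by
    intro n
    induction n using Nat.strong_induction_on with
    | _ n ih =>
      match n with
      | 0 =>
        have := hurec 0
        simp [hx0] at this
        simpa [hy1] using this.symm
      | (m+1) =>
        have hv := hvrec m
        rw [ih m (by omega), Finset.sum_congr rfl (fun j hj => by
          rw [ih j (by simp at hj; omega)])] at hv
        have hu := hurec (m+1)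
        rw [show (2*(m+1) : ℕ) = 2*m+2 from by ring] at hu
        have key : h 0 * y (2*m+3) = h 0 * (h 0 * x (2*m+2+2)) := by
          rw [hv, hu, mul_sub, Finset.mul_sum]
          congr 1
          exact Finset.sum_congr rfl (fun j _ => by ring)
        have key2 := mul_left_cancel₀ hh0 key
        rw [show 2*(m+1)+1 = 2*m+3 from by ring, show 2*(m+1)+2 = 2*m+2+2 from by ring, key2]
  -- rearranged recurrence
  have ulem : ∀ n, x (2*n)
      = h 0 * x (2*(n+1)) + ∑ m ∈ range n, h (2*(m+1)) * x (2*(n-m)) := by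
    intro n
    have hu := hurec n
    have hre := Finset.sum_range_reflect (fun j => h (2*(j+1)) * x (2*(n-j))) n
    have : ∑ j ∈ range n, h (2*(n-j)) * x (2*j+2)
        = ∑ m ∈ range n, h (2*(m+1)) * x (2*(n-m)) := by
      rw [← hre]
      refine Finset.sum_congr rfl (fun j hj => ?_)
      simp only [Finset.mem_range] at hj
      rw [show n-1-j+1 = n-j from by omega, show n-(n-1-j) = j+1 from by omega,
        show 2*(j+1) = 2*j+2 from by ring]
    rw [this] at hu
    rw [show 2*(n+1) = 2*n+2 from by ring]
    linarith
  -- partial sums bound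
  have hpartial : ∀ n, ∑ m ∈ range n, h (2*(m+1)) ≤ 1 - h 0 := by
    intro n
    have hs : ∑ i ∈ insert 0 ((range n).image (fun m => 2*(m+1))), h i ≤ 1 :=
      sum_le_hasSum _ (fun i _ => hnn i) hsum
    rw [Finset.sum_insert (by simp), Finset.sum_image (fun a _ b _ hab => by omega)] at hs
    linarith
  -- monotonicity and lower bound
  have P : ∀ n, (∀ j, j ≤ n → x (2*j) ≤ x (2*n)) ∧ 1 ≤ x (2*n) := by
    intro n
    induction n with
    | zero =>
      refine ⟨fun j hj => le_of_eq (by rw [Nat.le_zero.mp hj]), by norm_num [hx0]⟩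
    | succ n ih =>
      obtain ⟨ihm, ih1⟩ := ih
      have key : x (2*n) ≤ x (2*(n+1)) := by
        have e := ulem n
        have hb : ∑ m ∈ range n, h (2*(m+1)) * x (2*(n-m)) ≤ (1 - h 0) * x (2*n) := by
          calc ∑ m ∈ range n, h (2*(m+1)) * x (2*(n-m))
              ≤ ∑ m ∈ range n, h (2*(m+1)) * x (2*n) :=
                Finset.sum_le_sum (fun m hm =>
                  mul_le_mul_of_nonneg_left (ihm (n-m) (by omega)) (hnn _))
            _ = (∑ m ∈ range n, h (2*(m+1))) * x (2*n) := by rw [← Finset.sum_mul]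
            _ ≤ (1 - h 0) * x (2*n) :=
                mul_le_mul_of_nonneg_right (hpartial n) (by linarith)
        have : h 0 * x (2*n) ≤ h 0 * x (2*(n+1)) := by linarith
        exact le_of_mul_le_mul_left this h0
      refine ⟨fun j hj => ?_, le_trans ih1 key⟩
      rcases Nat.lt_succ_iff_lt_or_eq.mp (Nat.lt_succ_of_le hj) with hlt | heq
      · exact le_trans (ihm j (by omega)) key
      · rw [heq]
  have chain : ∀ j k, j ≤ k → x (2*j) ≤ x (2*k) := fun j k hjk => (P k).1 j hjk
  have one_le : ∀ k, 1 ≤ x (2*k) := fun k => (P k).2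
  have h0x2 : h 0 * x 2 = 1 := by
    have := hurec 0
    simpa [hx0] using this
  have A2 : ∀ k, 1 ≤ h 0 * x (2*(k+1)) := by
    intro k
    have := mul_le_mul_of_nonneg_left (chain 1 (k+1) (by omega)) h0.le
    rw [show (2*1 : ℕ) = 2 from rfl, h0x2] at this
    exact this
  -- formulas for D
  have Dev : ∀ k, D (2*k) = h 0 * (x (2*k) * x (2*k+2)) := by
    intro k
    rw [hD, hxodd k, hxy k]
    ring
  have Dod : ∀ k, D (2*k+1) = -(h 0 * (x (2*k+2))^2) := by
    intro k
    rw [hD, hxodd k, hxy k, show 2*k+1+1 = 2*(k+1) from by ring, hyeven (k+1)]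
    ring
  -- assemble
  intro n
  have e1 : (2*(n+1) : ℕ) = 2*n+2 := by ring
  have e2 : (2*(n+2) : ℕ) = 2*n+4 := by ring
  have c1 : x (2*n) ≤ x (2*n+2) := by rw [← e1]; exact chain n (n+1) (by omega)
  have c2 : x (2*n+2) ≤ x (2*n+4) := by rw [← e1, ← e2]; exact chain (n+1) (n+2) (by omega)
  have o1 : 1 ≤ x (2*n) := one_le n
  have o2 : 1 ≤ x (2*n+2) := by rw [← e1]; exact one_le (n+1)
  have a2 : 1 ≤ h 0 * x (2*n+2) := by rw [← e1]; exact A2 n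
  have a3 : 1 ≤ h 0 * x (2*n+4) := by rw [← e2]; exact A2 (n+1)
  have dev1 := Dev n
  have dev2 := Dev (n+1)
  rw [show 2*(n+1)+2 = 2*n+4 from by ring, e1] at dev2
  have dod1 := Dod n
  have dod2 := Dod (n+1)
  rw [show 2*(n+1)+1 = 2*n+3 from by ring, show 2*(n+1)+2 = 2*n+4 from by ring] at dod2
  refine ⟨hxodd n, dev1, ?_, ?_, dod1, ?_, ?_⟩
  · rw [dev1]; nlinarith
  · rw [dev1, dev2]; nlinarith
  · rw [dod1]; nlinarith
  · rw [dod1, dod2]; nlinarith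
end

section
/- Suppose |s| = 1 and H(s) = s^{\kappa}. Then there exists a positive integer d such that s^d = 1, d divides \kappa, and d divides every n with h_n \neq 0. In particular, if there is no integer d \geq 2 dividing \kappa and all indices n with h_n \neq 0 (the primitive case), then s = 1 is the only point on the unit circle where H(s) = s^{\kappa}. -/
theorem stmt_7 (h : ℕ → ℝ) (hnn : ∀ k, 0 ≤ h k) (hsum : HasSum h 1)
    (h0 : 0 < h 0) (κ : ℕ) (hκ : 1 ≤ κ)
    (H : ℂ → ℂ) (hH : ∀ s : ℂ, H s = ∑' n : ℕ, (h n : ℂ) * s ^ n) :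
    (∀ s : ℂ, ‖s‖ = 1 → H s = s ^ κ →
      ∃ d : ℕ, 0 < d ∧ s ^ d = 1 ∧ d ∣ κ ∧ ∀ n : ℕ, h n ≠ 0 → d ∣ n) ∧
    ((¬ ∃ d : ℕ, 2 ≤ d ∧ d ∣ κ ∧ ∀ n : ℕ, h n ≠ 0 → d ∣ n) →
      ∀ s : ℂ, ‖s‖ = 1 → H s = s ^ κ → s = 1) := by
  have main : ∀ s : ℂ, ‖s‖ = 1 → H s = s ^ κ →
      ∃ d : ℕ, 0 < d ∧ s ^ d = 1 ∧ d ∣ κ ∧ ∀ n : ℕ, h n ≠ 0 → d ∣ n := by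
    intro s hs hHs
    -- the series is summable
    have hnorm : ∀ n : ℕ, ‖(h n : ℂ) * s ^ n‖ = h n := by
      intro n
      rw [norm_mul, norm_pow, hs, one_pow, mul_one, Complex.norm_real,
        Real.norm_eq_abs, abs_of_nonneg (hnn n)]
    have hsummable : Summable fun n : ℕ => (h n : ℂ) * s ^ n := by
      apply Summable.of_norm
      simpa only [hnorm] using hsum.summable
    have hf : HasSum (fun n : ℕ => (h n : ℂ) * s ^ n) (s ^ κ) := by
      have := hsummable.hasSum
      rwa [← hH s, hHs] at this
    set c : ℂ := (starRingEnd ℂ) s ^ κ with hc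
    have hsc : s ^ κ * c = 1 := by
      rw [hc, ← mul_pow, Complex.mul_conj]
      norm_cast
      rw [Complex.normSq_eq_norm_sq, hs]
      simp
    have hcnorm : ‖c‖ = 1 := by
      rw [hc, norm_pow, RCLike.norm_conj, hs, one_pow]
    have hg : HasSum (fun n : ℕ => (h n : ℂ) * s ^ n * c) 1 := by
      rw [← hsc]; exact hf.mul_right c
    have hre : HasSum (fun n : ℕ => h n * (s ^ n * c).re) 1 := by
      have := RCLike.hasSum_re ℂ hg
      simp only [RCLike.one_re] at this
      convert this using 2 with n
      rw [mul_assoc, RCLike.re_to_complex, Complex.re_ofReal_mul]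
    have hdiff : HasSum (fun n : ℕ => h n - h n * (s ^ n * c).re) 0 := by
      simpa using hsum.sub hre
    have hle1 : ∀ n : ℕ, (s ^ n * c).re ≤ 1 := by
      intro n
      calc (s ^ n * c).re ≤ ‖s ^ n * c‖ := Complex.re_le_norm _
        _ = 1 := by rw [norm_mul, norm_pow, hs, one_pow, hcnorm, mul_one]
    have hnonneg : ∀ n : ℕ, 0 ≤ h n - h n * (s ^ n * c).re := by
      intro n
      have := mul_le_mul_of_nonneg_left (hle1 n) (hnn n)
      linarith
    have hzero : ∀ n : ℕ, h n - h n * (s ^ n * c).re = 0 := by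
      intro n
      have hle := le_hasSum hdiff n (fun j _ => hnonneg j)
      linarith [hnonneg n]
    -- for every n with h n ≠ 0, s^n * c = 1
    have hkey : ∀ n : ℕ, h n ≠ 0 → s ^ n * c = 1 := by
      intro n hn
      have hre1 : (s ^ n * c).re = 1 := by
        have h2 : h n * (1 - (s ^ n * c).re) = 0 := by linear_combination hzero n
        rcases mul_eq_zero.mp h2 with h3 | h3
        · exact absurd h3 hn
        · linarith
      have hnormz : ‖s ^ n * c‖ = 1 := by
        rw [norm_mul, norm_pow, hs, one_pow, hcnorm, mul_one]
      have hsq : (s ^ n * c).re ^ 2 + (s ^ n * c).im ^ 2 = 1 := by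
        have := Complex.normSq_apply (s ^ n * c)
        have h2 : Complex.normSq (s ^ n * c) = 1 := by
          rw [Complex.normSq_eq_norm_sq, hnormz, one_pow]
        nlinarith [this, h2]
      have him : (s ^ n * c).im = 0 := by nlinarith [hsq, hre1]
      exact Complex.ext (by rw [hre1, Complex.one_re]) (by rw [him, Complex.one_im])
    -- from n = 0 : c = 1, hence s ^ κ = 1
    have hc1 : c = 1 := by
      have := hkey 0 (ne_of_gt h0)
      simpa using this
    have hsk : s ^ κ = 1 := by rw [← hsc, hc1, mul_one]
    have hsn : ∀ n : ℕ, h n ≠ 0 → s ^ n = 1 := by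
      intro n hn
      have := hkey n hn
      rwa [hc1, mul_one] at this
    -- d = order of s
    have hfin : IsOfFinOrder s :=
      isOfFinOrder_iff_pow_eq_one.mpr ⟨κ, hκ, hsk⟩
    refine ⟨orderOf s, orderOf_pos_iff.mpr hfin, pow_orderOf_eq_one s,
      orderOf_dvd_of_pow_eq_one hsk, fun n hn => orderOf_dvd_of_pow_eq_one (hsn n hn)⟩
  refine ⟨main, ?_⟩
  intro hprim s hs hHs
  obtain ⟨d, hd0, hsd, hdκ, hdn⟩ := main s hs hHs
  have hd1 : d = 1 := by
    by_contra hne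
    exact hprim ⟨d, by omega, hdκ, hdn⟩
  rw [hd1, pow_one] at hsd
  exact hsd
end

section
/- If the random variable Z with P(Z = n) = h_n is not almost surely equal to \kappa (i.e., h_{\kappa} < 1), then the order of vanishing of H(s) - s^{\kappa} at s = 1 (along the real interval [0,1]) is at most 2. -/
/-!
Let `powQuot₁ n s = (s ^ n - 1) / (s - 1)` and
`powQuot₂ n s = (s ^ n - 1 - n (s - 1)) / (s - 1) ^ 2`; both are polynomials with nonnegative
coefficients, with values `n` and `n.choose 2` at `s = 1`.
If `H(s) - s ^ κ` vanished to order at least `3`, then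
`(H(s) - s ^ κ) / (s - 1) = ∑ h n * powQuot₁ n s - powQuot₁ κ s → 0` would force `E Z = κ`
(Fatou's lemma for series gives `≤`, and `powQuot₁ n s ≤ n` on `[0, 1]` gives `≥`), after which
`(H(s) - s ^ κ) / (s - 1) ^ 2 = ∑ h n * powQuot₂ n s - powQuot₂ κ s → 0` gives
`E (Z choose 2) ≤ κ choose 2`. Then `E (Z - κ) ^ 2 = 2 E (Z choose 2) + κ - κ ^ 2 ≤ 0`, so `Z = κ`
almost surely, i.e. `h κ = 1`.
-/

open Filter Set Finset Topology

def powQuot₁ (n : ℕ) (s : ℝ) : ℝ := ∑ i ∈ range n, s ^ i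

def powQuot₂ (n : ℕ) (s : ℝ) : ℝ := ∑ j ∈ range n, powQuot₁ j s

section PowQuot

variable (n : ℕ)

lemma powQuot₁_one : powQuot₁ n 1 = n := by simp [powQuot₁]

lemma powQuot₂_one : powQuot₂ n 1 = n.choose 2 := by
  simp only [powQuot₂, powQuot₁_one]
  rw [← Nat.cast_sum, sum_range_id, ← Nat.choose_two_right]

lemma continuous_powQuot₁ : Continuous (powQuot₁ n) := by
  unfold powQuot₁; fun_prop

lemma continuous_powQuot₂ : Continuous (powQuot₂ n) :=
  continuous_finsetSum _ fun j _ => continuous_powQuot₁ j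

lemma sub_one_mul_powQuot₁ (s : ℝ) : (s - 1) * powQuot₁ n s = s ^ n - 1 := by
  rw [powQuot₁, mul_comm, geom_sum_mul]

lemma sub_one_sq_mul_powQuot₂ (s : ℝ) :
    (s - 1) ^ 2 * powQuot₂ n s = s ^ n - 1 - n * (s - 1) := by
  have h : (s - 1) * powQuot₂ n s = powQuot₁ n s - n := by
    rw [powQuot₂, mul_sum]
    simp only [sub_one_mul_powQuot₁]
    simp [powQuot₁]
  linear_combination (s - 1) * h + sub_one_mul_powQuot₁ n s

lemma powQuot₁_nonneg {s : ℝ} (hs : 0 ≤ s) : 0 ≤ powQuot₁ n s :=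
  sum_nonneg fun i _ => pow_nonneg hs i

lemma powQuot₂_nonneg {s : ℝ} (hs : 0 ≤ s) : 0 ≤ powQuot₂ n s :=
  sum_nonneg fun j _ => powQuot₁_nonneg j hs

lemma powQuot₁_le {s : ℝ} (hs₀ : 0 ≤ s) (hs₁ : s ≤ 1) : powQuot₁ n s ≤ n := by
  unfold powQuot₁
  exact (sum_le_sum fun i _ => pow_le_one₀ hs₀ hs₁).trans_eq (by simp)

end PowQuot

lemma summable_and_tsum_le_of_tendsto {α : Type*} {l : Filter α} [l.NeBot]
    {f : ℕ → α → ℝ} {g : α → ℝ} {a : ℕ → ℝ} {L : ℝ}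
    (hf₀ : ∀ᶠ x in l, ∀ n, 0 ≤ f n x) (hf : ∀ᶠ x in l, HasSum (fun n => f n x) (g x))
    (ha : ∀ n, Tendsto (f n) l (𝓝 (a n))) (hg : Tendsto g l (𝓝 L)) :
    Summable a ∧ ∑' n, a n ≤ L := by
  have ha₀ n : 0 ≤ a n := ge_of_tendsto (ha n) (hf₀.mono fun x hx => hx n)
  have hle m : ∑ n ∈ range m, a n ≤ L :=
    le_of_tendsto_of_tendsto (tendsto_finsetSum _ fun n _ => ha n) hg <|
      (hf₀.and hf).mono fun x hx => sum_le_hasSum _ (fun n _ => hx.1 n) hx.2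
  exact ⟨summable_of_sum_range_le ha₀ hle, Real.tsum_le_of_sum_range_le ha₀ hle⟩

section GeneratingFunction

variable {h : ℕ → ℝ}

lemma summable_mul_pow {s : ℝ} (hnn : ∀ n, 0 ≤ h n) (hh : Summable h) (hs₀ : 0 ≤ s)
    (hs₁ : s ≤ 1) :
    Summable fun n => h n * s ^ n :=
  hh.of_norm_bounded fun n => by
    rw [norm_mul, norm_pow, Real.norm_of_nonneg (hnn n), Real.norm_of_nonneg hs₀]
    exact mul_le_of_le_one_right (hnn n) (pow_le_one₀ hs₀ hs₁)

lemma hasSum_mul_powQuot₁ {s g : ℝ} (hsum : HasSum h 1) (hg : HasSum (fun n => h n * s ^ n) g)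
    (hs : s ≠ 1) : HasSum (fun n => h n * powQuot₁ n s) ((g - 1) / (s - 1)) := by
  refine ((hg.sub hsum).div_const (s - 1)).congr_fun fun n => ?_
  rw [eq_div_iff (sub_ne_zero.2 hs)]
  linear_combination h n * sub_one_mul_powQuot₁ n s

lemma hasSum_mul_powQuot₂ {s g μ : ℝ} (hsum : HasSum h 1) (hμ : HasSum (fun n => h n * n) μ)
    (hg : HasSum (fun n => h n * s ^ n) g) (hs : s ≠ 1) :
    HasSum (fun n => h n * powQuot₂ n s) ((g - 1 - μ * (s - 1)) / (s - 1) ^ 2) := by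
  refine (((hg.sub hsum).sub (hμ.mul_right (s - 1))).div_const ((s - 1) ^ 2)).congr_fun
    fun n => ?_
  rw [eq_div_iff (pow_ne_zero 2 (sub_ne_zero.2 hs))]
  linear_combination h n * sub_one_sq_mul_powQuot₂ n s

end GeneratingFunction

lemma tendsto_powQuot₁_nhdsLT_one (n : ℕ) : Tendsto (powQuot₁ n) (𝓝[<] 1) (𝓝 n) :=
  (powQuot₁_one n ▸ (continuous_powQuot₁ n).tendsto 1).mono_left nhdsWithin_le_nhds

lemma tendsto_powQuot₂_nhdsLT_one (n : ℕ) : Tendsto (powQuot₂ n) (𝓝[<] 1) (𝓝 (n.choose 2)) :=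
  (powQuot₂_one n ▸ (continuous_powQuot₂ n).tendsto 1).mono_left nhdsWithin_le_nhds

section Moments

variable {h : ℕ → ℝ} {G : ℝ → ℝ} {κ : ℕ}

lemma hasSum_mul_cast_of_tendsto (hnn : ∀ n, 0 ≤ h n) (hsum : HasSum h 1)
    (hG : ∀ᶠ s in 𝓝[<] 1, HasSum (fun n => h n * s ^ n) (G s))
    (hv : Tendsto (fun s => (G s - s ^ κ) / (s - 1)) (𝓝[<] 1) (𝓝 0)) :
    HasSum (fun n => h n * n) κ := by
  have hs : ∀ᶠ s in 𝓝[<] (1 : ℝ), s ∈ Set.Ioo 0 1 := Ioo_mem_nhdsLT zero_lt_one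
  have hQ : ∀ᶠ s in 𝓝[<] (1 : ℝ),
      HasSum (fun n => h n * powQuot₁ n s) ((G s - 1) / (s - 1)) :=
    (hG.and hs).mono fun s hs => hasSum_mul_powQuot₁ hsum hs.1 hs.2.2.ne
  have hlim : Tendsto (fun s => (G s - 1) / (s - 1)) (𝓝[<] 1) (𝓝 κ) := by
    refine (zero_add (κ : ℝ) ▸ hv.add (tendsto_powQuot₁_nhdsLT_one κ)).congr' <|
      hs.mono fun s hs => ?_
    have hs1 : s - 1 ≠ 0 := sub_ne_zero.2 hs.2.ne
    field_simp
    linear_combination sub_one_mul_powQuot₁ κ s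
  obtain ⟨hsumm, hle⟩ := summable_and_tsum_le_of_tendsto
    (hs.mono fun s hs n => mul_nonneg (hnn n) (powQuot₁_nonneg n hs.1.le)) hQ
    (fun n => (tendsto_powQuot₁_nhdsLT_one n).const_mul (h n)) hlim
  have hge : (κ : ℝ) ≤ ∑' n, h n * n := le_of_tendsto hlim <| (hQ.and hs).mono fun s hs =>
    hasSum_le (fun n => mul_le_mul_of_nonneg_left (powQuot₁_le n hs.2.1.le hs.2.2.le) (hnn n))
      hs.1 hsumm.hasSum
  exact le_antisymm hle hge ▸ hsumm.hasSum

lemma summable_and_tsum_mul_choose_two_le (hnn : ∀ n, 0 ≤ h n) (hsum : HasSum h 1)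
    (hG : ∀ᶠ s in 𝓝[<] 1, HasSum (fun n => h n * s ^ n) (G s))
    (hμ : HasSum (fun n => h n * n) κ)
    (hv : Tendsto (fun s => (G s - s ^ κ) / (s - 1) ^ 2) (𝓝[<] 1) (𝓝 0)) :
    Summable (fun n => h n * n.choose 2) ∧ ∑' n, h n * n.choose 2 ≤ κ.choose 2 := by
  have hs : ∀ᶠ s in 𝓝[<] (1 : ℝ), s ∈ Set.Ioo 0 1 := Ioo_mem_nhdsLT zero_lt_one
  have hP : ∀ᶠ s in 𝓝[<] (1 : ℝ),
      HasSum (fun n => h n * powQuot₂ n s) ((G s - 1 - κ * (s - 1)) / (s - 1) ^ 2) :=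
    (hG.and hs).mono fun s hs => hasSum_mul_powQuot₂ hsum hμ hs.1 hs.2.2.ne
  have hlim : Tendsto (fun s => (G s - 1 - κ * (s - 1)) / (s - 1) ^ 2) (𝓝[<] 1)
      (𝓝 (κ.choose 2 : ℝ)) := by
    refine (zero_add (κ.choose 2 : ℝ) ▸ hv.add (tendsto_powQuot₂_nhdsLT_one κ)).congr' <|
      hs.mono fun s hs => ?_
    have hs1 : s - 1 ≠ 0 := sub_ne_zero.2 hs.2.ne
    field_simp
    linear_combination sub_one_sq_mul_powQuot₂ κ s
  exact summable_and_tsum_le_of_tendsto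
    (hs.mono fun s hs n => mul_nonneg (hnn n) (powQuot₂_nonneg n hs.1.le)) hP
    (fun n => (tendsto_powQuot₂_nhdsLT_one n).const_mul (h n)) hlim

lemma eq_one_of_tsum_mul_choose_two_le (hnn : ∀ n, 0 ≤ h n) (hsum : HasSum h 1)
    (hμ : HasSum (fun n => h n * n) κ) (h₂ : Summable fun n => h n * n.choose 2)
    (hle : ∑' n, h n * n.choose 2 ≤ κ.choose 2) : h κ = 1 := by
  set T := ∑' n, h n * (n.choose 2 : ℝ)
  have hvar :
      HasSum (fun n => h n * ((n : ℝ) - κ) ^ 2) (2 * T + (1 - 2 * κ) * κ + κ ^ 2 * 1) :=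
    (((h₂.hasSum.mul_left 2).add (hμ.mul_left ((1 : ℝ) - 2 * κ))).add
      (hsum.mul_left ((κ : ℝ) ^ 2))).congr_fun fun n => by
        rw [Nat.cast_choose_two]; ring
  have hterm_nonneg n : 0 ≤ h n * ((n : ℝ) - κ) ^ 2 := mul_nonneg (hnn n) (sq_nonneg _)
  have hvar_zero : 2 * T + (1 - 2 * κ) * κ + κ ^ 2 * 1 = (0 : ℝ) := by
    refine le_antisymm ?_ (hvar.nonneg hterm_nonneg)
    rw [Nat.cast_choose_two] at hle
    linarith
  have hterm_zero := (hasSum_zero_iff_of_nonneg hterm_nonneg).1 (hvar_zero ▸ hvar)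
  refine (hsum.unique (hasSum_single κ fun n hn => ?_)).symm
  have := congr_fun hterm_zero n
  simp only [Pi.zero_apply, mul_eq_zero, pow_eq_zero_iff two_ne_zero, sub_eq_zero,
    Nat.cast_inj] at this
  exact this.resolve_right hn

end Moments

theorem stmt_8_general (h : ℕ → ℝ) (hnn : ∀ k, 0 ≤ h k) (hsum : HasSum h 1)
    (κ : ℕ) (hκ1 : h κ < 1)
    (H : ℝ → ℝ) (hH : ∀ s : ℝ, H s = ∑' n : ℕ, h n * s ^ n)
    (r : ℕ)
    (hvan : ∀ k < r, Filter.Tendsto (fun s : ℝ => (H s - s ^ κ) / (s - 1) ^ k)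
      (nhdsWithin 1 (Set.Ico (0 : ℝ) 1)) (nhds 0)) :
    r ≤ 2 := by
  by_contra! hr
  rw [nhdsWithin_Ico_eq_nhdsLT zero_lt_one] at hvan
  have hG : ∀ᶠ s in 𝓝[<] (1 : ℝ), HasSum (fun n => h n * s ^ n) (H s) :=
    eventually_of_mem (Ioo_mem_nhdsLT zero_lt_one) fun s hs =>
      hH s ▸ (summable_mul_pow hnn hsum.summable hs.1.le hs.2.le).hasSum
  have hμ := hasSum_mul_cast_of_tendsto hnn hsum hG (by simpa using hvan 1 (by omega))
  obtain ⟨h₂, hle⟩ := summable_and_tsum_mul_choose_two_le hnn hsum hG hμ (hvan 2 hr)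
  exact hκ1.ne (eq_one_of_tsum_mul_choose_two_le hnn hsum hμ h₂ hle)

theorem stmt_8 (h : ℕ → ℝ) (hnn : ∀ k, 0 ≤ h k) (hsum : HasSum h 1)
    (h0 : 0 < h 0) (κ : ℕ) (hκ : 1 ≤ κ) (hκ1 : h κ < 1)
    (H : ℝ → ℝ) (hH : ∀ s : ℝ, H s = ∑' n : ℕ, h n * s ^ n)
    (r : ℕ)
    (hvan : ∀ k < r, Filter.Tendsto (fun s : ℝ => (H s - s ^ κ) / (s - 1) ^ k)
      (nhdsWithin 1 (Set.Ico (0 : ℝ) 1)) (nhds 0))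
    (hlim : ∃ L : ℝ, L ≠ 0 ∧ Filter.Tendsto (fun s : ℝ => (H s - s ^ κ) / (s - 1) ^ r)
      (nhdsWithin 1 (Set.Ico (0 : ℝ) 1)) (nhds L)) :
    r ≤ 2 :=
  stmt_8_general h hnn hsum κ hκ1 H hH r hvan
end

section
/- Let G(s) = (H(s) - s^{\kappa})/(1-s) as above with h_0 > 0. If H'(1) > \kappa then G has exactly one zero in (0,1), which is simple, and G(1) \neq 0. If H'(1) = \kappa, then G(s) > 0 for s \in [0,1) and G(1) = 0. If H'(1) < \kappa, then G(s) > 0 for all s \in [0,1]. -/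
open scoped ENNReal
open Finset Set

/-! Write `g n = [n < κ] - t n` with tails `t n = ∑_{k > n} h k ≥ 0`, so that the coefficients are
positive before `κ`, nonpositive from `κ` on, and `∑ t n = ∑ n h n = H'(1)`. For such a series,
`v^κ G(u) - u^κ G(v) = ∑ g n (v^κ u^n - u^κ v^n)` has nonnegative terms when `0 ≤ u < v`, so
`G(s) / s^κ` is strictly decreasing: `G` has at most one zero in `(0,1)`, and it is positive below
any point where it is nonnegative. Likewise `s G'(s) - κ G(s) = ∑ (n - κ) g n s^n < 0`, so `G'` is
negative at a zero. If `H'(1) ≤ κ`, then `g` is summable with `G(1) = κ - H'(1) ≥ 0`, which gives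
positivity on `[0,1)`. If `H'(1) > κ`, some partial sum of `g` is negative, so `G < 0` near `1`
while `G(0) = h 0 > 0`, and the intermediate value theorem provides the zero. -/

theorem ENNReal.tsum_natCast_mul_eq_tsum_tsum_add (f : ℕ → ℝ≥0∞) :
    ∑' n : ℕ, (n : ℝ≥0∞) * f n = ∑' n, ∑' k, f (k + (n + 1)) := by
  have hcount (n : ℕ) : (n : ℝ≥0∞) * f n = ∑' m, if m < n then f n else 0 := by
    rw [tsum_eq_sum (s := range n) fun m hm => if_neg (by simpa using hm)]
    simp [sum_ite_of_true (fun m hm => mem_range.mp hm)]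
  rw [tsum_congr hcount, ENNReal.tsum_comm]
  refine tsum_congr fun m => ?_
  rw [← ENNReal.summable.sum_add_tsum_nat_add' (k := m + 1),
    sum_eq_zero fun i hi => if_neg (by simp at hi; omega), zero_add]
  exact tsum_congr fun i => if_pos (by omega)

section PowerSeries

variable {c : ℕ → ℝ} {C : ℝ}

theorem summable_mul_pow_of_abs_le (hc : ∀ n, |c n| ≤ C) {x : ℝ} (hx : |x| < 1) :
    Summable fun n => c n * x ^ n :=
  .of_norm_bounded ((summable_geometric_of_lt_one (abs_nonneg x) hx).mul_left C) fun n => by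
    rw [norm_mul, norm_pow, Real.norm_eq_abs, Real.norm_eq_abs]
    exact mul_le_mul_of_nonneg_right (hc n) (by positivity)

theorem summable_mul_natCast_mul_pow_of_abs_le (hc : ∀ n, |c n| ≤ C) {x : ℝ} (hx : |x| < 1) :
    Summable fun n => c n * (n * x ^ n) := by
  have hgeom : Summable fun n : ℕ => (n : ℝ) ^ 1 * |x| ^ n :=
    summable_pow_mul_geometric_of_norm_lt_one 1 (by rwa [Real.norm_eq_abs, abs_abs])
  refine .of_norm_bounded (hgeom.mul_left C) fun n => ?_
  rw [norm_mul, norm_mul, norm_pow, Real.norm_eq_abs, Real.norm_eq_abs, Real.norm_eq_abs,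
    Nat.abs_cast, pow_one]
  exact mul_le_mul_of_nonneg_right (hc n) (by positivity)

theorem hasDerivAt_tsum_mul_pow (hc : ∀ n, |c n| ≤ C) {z : ℝ} (hz : |z| < 1) :
    HasDerivAt (fun x => ∑' n, c n * x ^ n) (∑' n, c n * (n * z ^ (n - 1))) z := by
  obtain ⟨r, hzr, hr1⟩ := exists_between hz
  have hr0 : 0 ≤ r := (abs_nonneg z).trans hzr.le
  have hbound : Summable fun n : ℕ => C * (n * r ^ (n - 1)) := by
    have hshift : Summable fun n : ℕ => ((n + 1 : ℕ) : ℝ) * r ^ (n + 1 - 1) := by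
      have h1 : Summable fun n : ℕ => (n : ℝ) ^ 1 * r ^ n :=
        summable_pow_mul_geometric_of_norm_lt_one 1 (by rwa [Real.norm_eq_abs, abs_of_nonneg hr0])
      refine (h1.add (summable_geometric_of_lt_one hr0 hr1)).congr fun n => ?_
      push_cast
      simp only [pow_one]
      ring
    exact ((summable_nat_add_iff 1 (f := fun n : ℕ => (n : ℝ) * r ^ (n - 1))).mp hshift).mul_left C
  refine hasDerivAt_tsum_of_isPreconnected (g := fun n x => c n * x ^ n)
    (g' := fun n x => c n * (n * x ^ (n - 1))) hbound isOpen_Ioo (convex_Ioo (-r) r).isPreconnected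
    (fun n y _ => (hasDerivAt_pow n y).const_mul (c n)) (fun n y hy => ?_)
    (abs_lt.mp hzr) (summable_mul_pow_of_abs_le hc hz) (abs_lt.mp hzr)
  rw [norm_mul, norm_mul, norm_pow, Real.norm_eq_abs, Real.norm_eq_abs, Real.norm_eq_abs,
    Nat.abs_cast]
  gcongr
  · exact (abs_nonneg _).trans (hc 0)
  · exact hc n
  · exact abs_le.mpr ⟨hy.1.le, hy.2.le⟩

end PowerSeries

structure ChangesSignAt (c : ℕ → ℝ) (κ : ℕ) : Prop where
  pos : 0 < κ
  pos_of_lt : ∀ n < κ, 0 < c n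
  nonpos_of_le : ∀ n, κ ≤ n → c n ≤ 0

namespace ChangesSignAt

variable {c : ℕ → ℝ} {κ : ℕ}

theorem mul_pow_sub_nonneg (hc : ChangesSignAt c κ) {u v : ℝ} (hu : 0 ≤ u) (huv : u ≤ v)
    (n : ℕ) : 0 ≤ c n * (v ^ κ * u ^ n - u ^ κ * v ^ n) := by
  have hv : 0 ≤ v := hu.trans huv
  rcases lt_or_ge n κ with hn | hn
  · obtain ⟨m, rfl⟩ := Nat.exists_eq_add_of_le hn.le
    have hfactor : v ^ (n + m) * u ^ n - u ^ (n + m) * v ^ n = u ^ n * v ^ n * (v ^ m - u ^ m) := by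
      ring
    rw [hfactor]
    exact mul_nonneg (hc.pos_of_lt n hn).le
      (mul_nonneg (by positivity) (sub_nonneg.mpr (pow_le_pow_left₀ hu huv m)))
  · obtain ⟨m, rfl⟩ := Nat.exists_eq_add_of_le hn
    have hfactor : v ^ κ * u ^ (κ + m) - u ^ κ * v ^ (κ + m) = u ^ κ * v ^ κ * (u ^ m - v ^ m) := by
      ring
    rw [hfactor]
    exact mul_nonneg_of_nonpos_of_nonpos (hc.nonpos_of_le _ hn)
      (mul_nonpos_of_nonneg_of_nonpos (by positivity) (sub_nonpos.mpr (pow_le_pow_left₀ hu huv m)))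

theorem pow_mul_tsum_lt (hc : ChangesSignAt c κ) {u v : ℝ} (hu : 0 ≤ u) (huv : u < v)
    (hsu : Summable fun n => c n * u ^ n) (hsv : Summable fun n => c n * v ^ n) :
    u ^ κ * ∑' n, c n * v ^ n < v ^ κ * ∑' n, c n * u ^ n := by
  have hsplit (n : ℕ) :
      c n * (v ^ κ * u ^ n - u ^ κ * v ^ n) = v ^ κ * (c n * u ^ n) - u ^ κ * (c n * v ^ n) := by
    ring
  have hsum := (hsu.mul_left (v ^ κ)).sub (hsv.mul_left (u ^ κ))
  have hpos : 0 < ∑' n, c n * (v ^ κ * u ^ n - u ^ κ * v ^ n) := by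
    refine (hsum.congr fun n => (hsplit n).symm).tsum_pos (hc.mul_pow_sub_nonneg hu huv.le) 0 ?_
    simpa using mul_pos (hc.pos_of_lt 0 hc.pos) (sub_pos.mpr (pow_lt_pow_left₀ huv hu hc.pos.ne'))
  rw [tsum_congr hsplit, (hsu.mul_left _).tsum_sub (hsv.mul_left _), tsum_mul_left,
    tsum_mul_left] at hpos
  linarith

theorem tsum_mul_pow_pos_of_lt (hc : ChangesSignAt c κ) {u v : ℝ} (hu : 0 ≤ u) (huv : u < v)
    (hsu : Summable fun n => c n * u ^ n) (hsv : Summable fun n => c n * v ^ n)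
    (hv : 0 ≤ ∑' n, c n * v ^ n) : 0 < ∑' n, c n * u ^ n :=
  pos_of_mul_pos_right
    ((mul_nonneg (pow_nonneg hu κ) hv).trans_lt (hc.pow_mul_tsum_lt hu huv hsu hsv))
    (pow_nonneg (hu.trans huv.le) κ)

theorem tsum_mul_pow_pos_of_hasSum (hc : ChangesSignAt c κ) {x : ℝ} (hx : HasSum c x)
    (hx0 : 0 ≤ x) {s : ℝ} (hs : s ∈ Ico (0 : ℝ) 1) : 0 < ∑' n, c n * s ^ n := by
  have hsummable {y : ℝ} (hy : |y| ≤ 1) : Summable fun n => c n * y ^ n :=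
    .of_norm_bounded hx.summable.abs fun n => by
      rw [norm_mul, norm_pow, Real.norm_eq_abs, Real.norm_eq_abs]
      exact mul_le_of_le_one_right (abs_nonneg _) (pow_le_one₀ (abs_nonneg y) hy)
  refine hc.tsum_mul_pow_pos_of_lt hs.1 hs.2 (hsummable (abs_le.mpr ⟨by linarith [hs.1], hs.2.le⟩))
    (hsummable (by simp)) ?_
  simpa [hx.tsum_eq] using hx0

theorem eq_of_tsum_mul_pow_eq_zero (hc : ChangesSignAt c κ) {u v : ℝ} (hu : 0 ≤ u) (hv : 0 ≤ v)
    (hsu : Summable fun n => c n * u ^ n) (hsv : Summable fun n => c n * v ^ n)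
    (hu0 : ∑' n, c n * u ^ n = 0) (hv0 : ∑' n, c n * v ^ n = 0) : u = v := by
  rcases lt_trichotomy u v with huv | huv | huv
  · exact absurd hu0 (hc.tsum_mul_pow_pos_of_lt hu huv hsu hsv hv0.ge).ne'
  · exact huv
  · exact absurd hv0 (hc.tsum_mul_pow_pos_of_lt hv huv hsv hsu hu0.ge).ne'

theorem tsum_mul_natCast_mul_pow_lt (hc : ChangesSignAt c κ) {z : ℝ} (hz : 0 ≤ z)
    (hs : Summable fun n => c n * z ^ n) (hs' : Summable fun n => c n * (n * z ^ n)) :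
    ∑' n, c n * (n * z ^ n) < κ * ∑' n, c n * z ^ n := by
  have hsplit (n : ℕ) : c n * ((κ - n) * z ^ n) = κ * (c n * z ^ n) - c n * (n * z ^ n) := by
    ring
  have hterm (n : ℕ) : 0 ≤ c n * ((κ - n) * z ^ n) := by
    rcases lt_or_ge n κ with hn | hn
    · exact mul_nonneg (hc.pos_of_lt n hn).le
        (mul_nonneg (sub_nonneg.mpr (by exact_mod_cast hn.le)) (pow_nonneg hz n))
    · exact mul_nonneg_of_nonpos_of_nonpos (hc.nonpos_of_le n hn)
        (mul_nonpos_of_nonpos_of_nonneg (sub_nonpos.mpr (by exact_mod_cast hn)) (pow_nonneg hz n))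
  have hpos : 0 < ∑' n, c n * ((κ - n) * z ^ n) := by
    refine (((hs.mul_left _).sub hs').congr fun n => (hsplit n).symm).tsum_pos hterm 0 ?_
    simpa using mul_pos (hc.pos_of_lt 0 hc.pos) (Nat.cast_pos.mpr hc.pos)
  rw [tsum_congr hsplit, (hs.mul_left _).tsum_sub hs', tsum_mul_left] at hpos
  linarith

variable {C : ℝ}

theorem exists_tsum_mul_pow_neg (hc : ChangesSignAt c κ) (hbdd : ∀ n, |c n| ≤ C) {N : ℕ}
    (hN : ∑ n ∈ range N, c n < 0) : ∃ s ∈ Ioo (0 : ℝ) 1, ∑' n, c n * s ^ n < 0 := by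
  have hκN : κ ≤ N := by
    by_contra! hNκ
    exact hN.not_ge (sum_nonneg fun n hn => (hc.pos_of_lt n ((mem_range.mp hn).trans hNκ)).le)
  have hP : ContinuousAt (fun s : ℝ => ∑ n ∈ range N, c n * s ^ n) 1 := by fun_prop
  have hP1 : ∑ n ∈ range N, c n * (1 : ℝ) ^ n < 0 := by simpa using hN
  obtain ⟨s, hPs, hs⟩ := ((hP.eventually (gt_mem_nhds hP1)).filter_mono nhdsWithin_le_nhds |>.and
    (Ioo_mem_nhdsLT zero_lt_one)).exists
  refine ⟨s, hs, ?_⟩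
  have htail : ∑' k, c (k + N) * s ^ (k + N) ≤ 0 := tsum_nonpos fun k =>
    mul_nonpos_of_nonpos_of_nonneg (hc.nonpos_of_le _ (by omega)) (pow_nonneg hs.1.le _)
  have hsummable := summable_mul_pow_of_abs_le hbdd (abs_lt.mpr ⟨by linarith [hs.1], hs.2⟩)
  rw [← hsummable.sum_add_tsum_nat_add N]
  linarith

theorem deriv_tsum_mul_pow_neg (hc : ChangesSignAt c κ) (hbdd : ∀ n, |c n| ≤ C) {z : ℝ}
    (hz : z ∈ Ioo (0 : ℝ) 1) (hz0 : ∑' n, c n * z ^ n = 0) :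
    deriv (fun s => ∑' n, c n * s ^ n) z < 0 := by
  have habs : |z| < 1 := abs_lt.mpr ⟨by linarith [hz.1], hz.2⟩
  rw [(hasDerivAt_tsum_mul_pow hbdd habs).deriv]
  have hlt := hc.tsum_mul_natCast_mul_pow_lt hz.1.le (summable_mul_pow_of_abs_le hbdd habs)
    (summable_mul_natCast_mul_pow_of_abs_le hbdd habs)
  rw [hz0, mul_zero] at hlt
  have hEuler : z * ∑' n, c n * (n * z ^ (n - 1)) = ∑' n, c n * (n * z ^ n) := by
    rw [← tsum_mul_left]
    refine tsum_congr fun n => ?_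
    rcases n with _ | n
    · simp
    · rw [Nat.add_sub_cancel, pow_succ]
      ring
  exact neg_of_mul_neg_right (hEuler ▸ hlt) hz.1.le

theorem exists_unique_zero (hc : ChangesSignAt c κ) (hbdd : ∀ n, |c n| ≤ C) {N : ℕ}
    (hN : ∑ n ∈ range N, c n < 0) :
    ∃ z ∈ Ioo (0 : ℝ) 1, ∑' n, c n * z ^ n = 0 ∧ deriv (fun s => ∑' n, c n * s ^ n) z ≠ 0 ∧
      ∀ w ∈ Ioo (0 : ℝ) 1, ∑' n, c n * w ^ n = 0 → w = z := by
  have habs {x : ℝ} (hx : x ∈ Ioo (0 : ℝ) 1) : |x| < 1 := abs_lt.mpr ⟨by linarith [hx.1], hx.2⟩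
  obtain ⟨s, hs, hFs⟩ := hc.exists_tsum_mul_pow_neg hbdd hN
  have hcont : ContinuousOn (fun x => ∑' n, c n * x ^ n) (Icc 0 s) := fun x hx => by
    have hx1 : |x| < 1 := abs_lt.mpr ⟨by linarith [hx.1], hx.2.trans_lt hs.2⟩
    exact (hasDerivAt_tsum_mul_pow hbdd hx1).continuousAt.continuousWithinAt
  have hF0 : ∑' n, c n * (0 : ℝ) ^ n = c 0 := by
    rw [tsum_eq_single 0 fun n hn => by simp [hn]]
    simp
  obtain ⟨z, hz, hFz⟩ := intermediate_value_Ioo' hs.1.le hcont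
    ⟨hFs, hF0 ▸ hc.pos_of_lt 0 hc.pos⟩
  have hz1 : z ∈ Ioo (0 : ℝ) 1 := ⟨hz.1, hz.2.trans hs.2⟩
  refine ⟨z, hz1, hFz, (hc.deriv_tsum_mul_pow_neg hbdd hz1 hFz).ne, fun w hw hFw => ?_⟩
  exact hc.eq_of_tsum_mul_pow_eq_zero hw.1.le hz1.1.le (summable_mul_pow_of_abs_le hbdd (habs hw))
    (summable_mul_pow_of_abs_le hbdd (habs hz1)) hFw hFz

end ChangesSignAt

section Tail

theorem hasSum_ite_lt (κ : ℕ) : HasSum (fun n => if n < κ then (1 : ℝ) else 0) κ := by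
  have hfin : HasSum (fun n => if n < κ then (1 : ℝ) else 0)
      (∑ n ∈ range κ, if n < κ then (1 : ℝ) else 0) :=
    hasSum_sum_of_ne_finset_zero fun n hn => if_neg (by simpa using hn)
  simpa [sum_ite_of_true fun n hn => mem_range.mp hn] using hfin

variable {κ : ℕ} {t g : ℕ → ℝ}

theorem hasSum_sub_iff_of_eq_ite_sub (hg : ∀ n, g n = (if n < κ then 1 else 0) - t n) {r : ℝ} :
    HasSum g (κ - r) ↔ HasSum t r := by
  rw [show g = fun n => (if n < κ then 1 else 0) - t n from funext hg]
  exact ⟨fun h => by simpa using (hasSum_ite_lt κ).sub h, (hasSum_ite_lt κ).sub⟩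

theorem tsum_ofReal_eq_of_hasSum (hg : ∀ n, g n = (if n < κ then 1 else 0) - t n)
    (ht : ∀ n, 0 ≤ t n) {x : ℝ} (hx : HasSum g x) :
    ∑' n, ENNReal.ofReal (t n) = ENNReal.ofReal (κ - x) := by
  have htx : HasSum t (κ - x) := (hasSum_sub_iff_of_eq_ite_sub hg).mp (by simpa using hx)
  rw [← ENNReal.ofReal_tsum_of_nonneg ht htx.summable, htx.tsum_eq]

theorem hasSum_of_tsum_ofReal_ne_top (hg : ∀ n, g n = (if n < κ then 1 else 0) - t n)
    (ht : ∀ n, 0 ≤ t n) (hE : ∑' n, ENNReal.ofReal (t n) ≠ ⊤) :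
    HasSum g (κ - (∑' n, ENNReal.ofReal (t n)).toReal) := by
  refine (hasSum_sub_iff_of_eq_ite_sub hg).mpr ?_
  rw [ENNReal.tsum_toReal_eq fun _ => ENNReal.ofReal_ne_top]
  simpa only [ENNReal.toReal_ofReal (ht _)] using ENNReal.hasSum_toReal hE

theorem exists_sum_range_neg_of_natCast_lt (hg : ∀ n, g n = (if n < κ then 1 else 0) - t n)
    (ht : ∀ n, 0 ≤ t n) (hE : (κ : ℝ≥0∞) < ∑' n, ENNReal.ofReal (t n)) :
    ∃ N, ∑ n ∈ range N, g n < 0 := by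
  rw [ENNReal.tsum_eq_iSup_nat, lt_iSup_iff] at hE
  obtain ⟨N, hN⟩ := hE
  rw [← ENNReal.ofReal_sum_of_nonneg fun n _ => ht n, ENNReal.natCast_lt_ofReal] at hN
  have hind : ∑ n ∈ range N, (if n < κ then (1 : ℝ) else 0) ≤ κ :=
    sum_le_hasSum _ (fun n _ => by positivity) (hasSum_ite_lt κ)
  refine ⟨N, ?_⟩
  simp only [hg, sum_sub_distrib]
  linarith

end Tail

section CDF

def cdfSubIndicator (h : ℕ → ℝ) (κ n : ℕ) : ℝ :=
  (∑ k ∈ range (n + 1), h k) - if κ ≤ n then 1 else 0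

variable {h : ℕ → ℝ} {κ : ℕ}

theorem changesSignAt_cdfSubIndicator (hnn : ∀ k, 0 ≤ h k) (hsum : HasSum h 1) (h0 : 0 < h 0)
    (hκ : 1 ≤ κ) : ChangesSignAt (cdfSubIndicator h κ) κ where
  pos := hκ
  pos_of_lt n hn := by
    rw [cdfSubIndicator, if_neg (not_le.mpr hn), sub_zero]
    exact h0.trans_le (single_le_sum (fun k _ => hnn k) (mem_range.mpr n.succ_pos))
  nonpos_of_le n hn := by
    rw [cdfSubIndicator, if_pos hn, sub_nonpos]
    exact sum_le_hasSum _ (fun k _ => hnn k) hsum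

theorem abs_cdfSubIndicator_le_one (hnn : ∀ k, 0 ≤ h k) (hsum : HasSum h 1) (n : ℕ) :
    |cdfSubIndicator h κ n| ≤ 1 := by
  have hle : ∑ k ∈ range (n + 1), h k ≤ 1 := sum_le_hasSum _ (fun k _ => hnn k) hsum
  have hnonneg : 0 ≤ ∑ k ∈ range (n + 1), h k := sum_nonneg fun k _ => hnn k
  rw [cdfSubIndicator, abs_le]
  split_ifs <;> constructor <;> linarith

theorem cdfSubIndicator_eq_ite_sub_tsum (hsum : HasSum h 1) (n : ℕ) :
    cdfSubIndicator h κ n = (if n < κ then 1 else 0) - ∑' k, h (k + (n + 1)) := by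
  have hsplit := hsum.summable.sum_add_tsum_nat_add (n + 1)
  rw [hsum.tsum_eq] at hsplit
  rw [cdfSubIndicator]
  split_ifs <;> first | omega | linarith

theorem tsum_ofReal_natCast_mul_eq (hnn : ∀ k, 0 ≤ h k) (hs : Summable h) :
    ∑' n : ℕ, ENNReal.ofReal (n * h n) = ∑' n, ENNReal.ofReal (∑' k, h (k + (n + 1))) := by
  simp_rw [ENNReal.ofReal_mul (Nat.cast_nonneg _), ENNReal.ofReal_natCast,
    ENNReal.tsum_natCast_mul_eq_tsum_tsum_add,
    ENNReal.ofReal_tsum_of_nonneg (fun _ => hnn _) ((summable_nat_add_iff _).mpr hs)]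

end CDF

theorem stmt_10 (h : ℕ → ℝ) (hnn : ∀ k, 0 ≤ h k) (hsum : HasSum h 1)
    (h0 : 0 < h 0) (κ : ℕ) (hκ : 1 ≤ κ)
    (g : ℕ → ℝ)
    (hg : ∀ n : ℕ, g n = (∑ k ∈ Finset.range (n + 1), h k) - if κ ≤ n then 1 else 0)
    (G : ℝ → ℝ) (hG : ∀ s : ℝ, G s = ∑' n : ℕ, g n * s ^ n)
    (E : ℝ≥0∞) (hE : E = ∑' n : ℕ, ENNReal.ofReal ((n : ℝ) * h n)) :
    ((κ : ℝ≥0∞) < E →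
      (∃ z ∈ Set.Ioo (0 : ℝ) 1, G z = 0 ∧ deriv G z ≠ 0 ∧
        ∀ w ∈ Set.Ioo (0 : ℝ) 1, G w = 0 → w = z) ∧ ¬ HasSum g 0) ∧
    (E = (κ : ℝ≥0∞) →
      (∀ s ∈ Set.Ico (0 : ℝ) 1, 0 < G s) ∧ HasSum g 0) ∧
    (E < (κ : ℝ≥0∞) → ∀ s ∈ Set.Icc (0 : ℝ) 1, 0 < G s) := by
  obtain rfl : G = fun s => ∑' n, g n * s ^ n := funext hG
  obtain rfl : g = cdfSubIndicator h κ := funext hg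
  rw [tsum_ofReal_natCast_mul_eq hnn hsum.summable] at hE
  subst hE
  have hgt := cdfSubIndicator_eq_ite_sub_tsum (κ := κ) hsum
  have ht (n : ℕ) : 0 ≤ ∑' k, h (k + (n + 1)) := tsum_nonneg fun k => hnn _
  have hc := changesSignAt_cdfSubIndicator hnn hsum h0 hκ
  refine ⟨fun hlt => ⟨?_, fun hg0 => ?_⟩, fun heq => ?_, fun hlt s hs => ?_⟩
  · obtain ⟨N, hN⟩ := exists_sum_range_neg_of_natCast_lt hgt ht hlt
    exact hc.exists_unique_zero (abs_cdfSubIndicator_le_one hnn hsum) hN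
  · rw [tsum_ofReal_eq_of_hasSum hgt ht hg0, sub_zero, ENNReal.ofReal_natCast] at hlt
    exact hlt.false
  · have hg0 := hasSum_of_tsum_ofReal_ne_top hgt ht (heq ▸ ENNReal.natCast_ne_top κ)
    rw [heq, ENNReal.toReal_natCast, sub_self] at hg0
    exact ⟨fun s hs => hc.tsum_mul_pow_pos_of_hasSum hg0 le_rfl hs, hg0⟩
  · have hgx := hasSum_of_tsum_ofReal_ne_top hgt ht hlt.ne_top
    have hx : 0 < κ - (∑' n, ENNReal.ofReal (∑' k, h (k + (n + 1)))).toReal := by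
      rw [sub_pos, ← ENNReal.toReal_natCast]
      exact (ENNReal.toReal_lt_toReal hlt.ne_top (ENNReal.natCast_ne_top κ)).mpr hlt
    rcases hs.2.eq_or_lt with rfl | hs1
    · simpa [hgx.tsum_eq] using hx
    · exact hc.tsum_mul_pow_pos_of_hasSum hgx hx.le ⟨hs.1, hs1⟩
end

section
/- Let a \in (0,1] be the smallest positive real zero of H(s) - s^{\kappa}. Then every zero \zeta of H(s) - s^{\kappa} with |\zeta| < 1 satisfies 0 < |\zeta| \leq a; moreover |\zeta| = a forces \zeta = a e^{2\pi i j/d} for some integer d dividing \kappa and dividing every n with h_n \neq 0. -/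
open Complex in
private lemma aux_re_eq_norm {z : ℂ} (hz : z.re = ‖z‖) : z = (z.re : ℂ) := by
  have h1 : ‖z‖ ^ 2 = z.re * z.re + z.im * z.im := by
    rw [Complex.sq_norm, Complex.normSq_apply]
  have h4 : ‖z‖ ^ 2 = z.re * z.re := by rw [← hz]; ring
  have h3 : z.im * z.im = 0 := by linarith
  have h2 : z.im = 0 := mul_self_eq_zero.mp h3
  apply Complex.ext
  · simp
  · simp [h2]

private lemma aux_jensen {h : ℕ → ℝ} (hnn : ∀ k, 0 ≤ h k) (hsum : HasSum h 1)
    {a θ S : ℝ} (ha0 : 0 ≤ a) (hθ0 : 0 < θ) (hθ1 : θ < 1)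
    (hS : HasSum (fun n => h n * a ^ n) S) (hS0 : 0 < S) (hS1 : S ≠ 1)
    (h0 : 0 < h 0) :
    ∑' n, h n * (a ^ n) ^ θ < S ^ θ := by
  have hSθ : 0 < S ^ θ := Real.rpow_pos_of_pos hS0 _
  set g : ℕ → ℝ := fun n => h n * (S ^ θ * (1 + θ * (a ^ n / S - 1))) with hg
  have hgs : HasSum g (S ^ θ) := by
    have h1 : HasSum (fun n => S ^ θ * (1 - θ) * h n) (S ^ θ * (1 - θ) * 1) :=
      hsum.mul_left _
    have h2 : HasSum (fun n => θ * S ^ θ / S * (h n * a ^ n)) (θ * S ^ θ / S * S) :=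
      hS.mul_left _
    have h3 := h1.add h2
    have h4 : S ^ θ * (1 - θ) * 1 + θ * S ^ θ / S * S = S ^ θ := by
      field_simp
      ring
    rw [h4] at h3
    convert h3 using 1
    funext n
    simp only [hg]
    ring
  have hle : ∀ n, h n * (a ^ n) ^ θ ≤ g n := by
    intro n
    have han : (0:ℝ) ≤ a ^ n := pow_nonneg ha0 n
    have hdiv : (0:ℝ) ≤ a ^ n / S := div_nonneg han hS0.le
    have hs1 : (-1:ℝ) ≤ a ^ n / S - 1 := by linarith
    have hb := rpow_one_add_le_one_add_mul_self hs1 hθ0.le hθ1.le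
    have h1 : (a ^ n / S) ^ θ ≤ 1 + θ * (a ^ n / S - 1) := by
      have e : (1 : ℝ) + (a ^ n / S - 1) = a ^ n / S := by ring
      rwa [e] at hb
    have key : (a ^ n) ^ θ ≤ S ^ θ * (1 + θ * (a ^ n / S - 1)) := by
      calc (a ^ n) ^ θ = (S * (a ^ n / S)) ^ θ := by
            rw [mul_div_cancel₀ _ hS0.ne']
        _ = S ^ θ * (a ^ n / S) ^ θ := Real.mul_rpow hS0.le hdiv
        _ ≤ S ^ θ * (1 + θ * (a ^ n / S - 1)) :=
            mul_le_mul_of_nonneg_left h1 hSθ.le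
    exact mul_le_mul_of_nonneg_left key (hnn n)
  have hlt0 : h 0 * (a ^ 0) ^ θ < g 0 := by
    have hs' : 1 / S - 1 ≠ 0 := by
      intro hcon
      apply hS1
      have : 1 / S = 1 := by linarith
      field_simp at this
      linarith
    have hds : (0:ℝ) < 1 / S := by positivity
    have hs1 : (-1:ℝ) ≤ 1 / S - 1 := by linarith
    have hb := rpow_one_add_lt_one_add_mul_self hs1 hs' hθ0 hθ1
    have e : (1 : ℝ) + (1 / S - 1) = 1 / S := by ring
    rw [e] at hb
    have e2 : (1:ℝ) = S ^ θ * (1 / S) ^ θ := by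
      rw [← Real.mul_rpow hS0.le hds.le, mul_one_div, div_self hS0.ne', Real.one_rpow]
    simp only [hg, pow_zero, Real.one_rpow]
    calc h 0 * 1 = h 0 * (S ^ θ * (1 / S) ^ θ) := by rw [← e2]
      _ < h 0 * (S ^ θ * (1 + θ * (1 / S - 1))) := by
          exact mul_lt_mul_of_pos_left (mul_lt_mul_of_pos_left hb hSθ) h0
  calc ∑' n, h n * (a ^ n) ^ θ
      < ∑' n, g n :=
        Summable.tsum_lt_tsum_of_nonneg
          (fun n => mul_nonneg (hnn n) (Real.rpow_nonneg (pow_nonneg ha0 n) θ))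
          hle hlt0 hgs.summable
    _ = S ^ θ := hgs.tsum_eq

open Complex in
theorem stmt_11 (h : ℕ → ℝ) (hnn : ∀ k, 0 ≤ h k) (hsum : HasSum h 1)
    (h0 : 0 < h 0) (κ : ℕ) (hκ : 1 ≤ κ)
    (H : ℂ → ℂ) (hH : ∀ s : ℂ, H s = ∑' n : ℕ, (h n : ℂ) * s ^ n)
    (a : ℝ) (ha : a ∈ Set.Ioc (0 : ℝ) 1)
    (haz : H (a : ℂ) = (a : ℂ) ^ κ)
    (hamin : ∀ t : ℝ, 0 < t → t < a → H (t : ℂ) ≠ (t : ℂ) ^ κ) :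
    ∀ ζ : ℂ, ‖ζ‖ < 1 → H ζ = ζ ^ κ →
      0 < ‖ζ‖ ∧ ‖ζ‖ ≤ a ∧
      (‖ζ‖ = a → ∃ d : ℕ, 0 < d ∧ d ∣ κ ∧ (∀ n : ℕ, h n ≠ 0 → d ∣ n) ∧
        ∃ j : ℕ, j ≤ d - 1 ∧
          ζ = (a : ℂ) * Complex.exp (2 * Real.pi * Complex.I * j / d)) := by
  obtain ⟨ha0, ha1⟩ := ha
  intro ζ hζ1 hζz
  have hsummable : Summable h := hsum.summable
  -- complex summability
  have hSC : ∀ z : ℂ, ‖z‖ ≤ 1 → Summable fun n => (h n : ℂ) * z ^ n := by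
    intro z hz
    apply Summable.of_norm_bounded hsummable
    intro n
    rw [norm_mul, norm_pow, Complex.norm_real, Real.norm_of_nonneg (hnn n)]
    calc h n * ‖z‖ ^ n ≤ h n * 1 :=
          mul_le_mul_of_nonneg_left (pow_le_one₀ (norm_nonneg z) hz) (hnn n)
      _ = h n := mul_one _
  -- real summability
  have hSR : ∀ t : ℝ, 0 ≤ t → t ≤ 1 → Summable fun n => h n * t ^ n := by
    intro t ht0 ht1
    apply Summable.of_norm_bounded hsummable
    intro n
    rw [Real.norm_of_nonneg (mul_nonneg (hnn n) (pow_nonneg ht0 n))]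
    calc h n * t ^ n ≤ h n * 1 :=
          mul_le_mul_of_nonneg_left (pow_le_one₀ ht0 ht1) (hnn n)
      _ = h n := mul_one _
  -- H at real points
  have hHR : ∀ t : ℝ, H (t : ℂ) = ((∑' n, h n * t ^ n : ℝ) : ℂ) := by
    intro t
    rw [hH, Complex.ofReal_tsum]
    congr 1
    funext n
    push_cast
    ring
  have hareal : ∑' n, h n * a ^ n = a ^ κ := by
    have h1 := haz
    rw [hHR a] at h1
    exact_mod_cast h1
  have hSa : HasSum (fun n => h n * a ^ n) (a ^ κ) := by
    have := (hSR a ha0.le ha1).hasSum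
    rwa [hareal] at this
  -- part A : ζ ≠ 0
  have hζ0 : ζ ≠ 0 := by
    intro hz
    rw [hz, hH] at hζz
    have he : (∑' n : ℕ, (h n : ℂ) * (0:ℂ) ^ n) = (h 0 : ℂ) := by
      rw [tsum_eq_single 0]
      · simp
      · intro n hn
        simp [zero_pow hn]
    rw [he, zero_pow (by omega : κ ≠ 0)] at hζz
    have : h 0 = 0 := by exact_mod_cast hζz
    exact h0.ne' this
  set r := ‖ζ‖ with hr
  have hr0 : 0 < r := norm_pos_iff.mpr hζ0
  -- norm bound
  have hnorm_eq : (fun n => ‖(h n : ℂ) * ζ ^ n‖) = fun n => h n * r ^ n := by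
    funext n
    rw [norm_mul, norm_pow, Complex.norm_real, Real.norm_of_nonneg (hnn n)]
  have hnormH : r ^ κ ≤ ∑' n, h n * r ^ n := by
    have h1 : ‖H ζ‖ = r ^ κ := by rw [hζz, norm_pow]
    have h2 : ‖H ζ‖ ≤ ∑' n, h n * r ^ n := by
      rw [hH]
      have h3 := norm_tsum_le_tsum_norm (f := fun n => (h n : ℂ) * ζ ^ n)
        (by rw [hnorm_eq]; exact hSR r hr0.le hζ1.le)
      rwa [hnorm_eq] at h3
    linarith
  -- power rewriting helper (used with a < 1 case)
  have hra : r ≤ a := by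
    by_contra hcon
    push_neg at hcon
    have ha1' : a < 1 := lt_trans hcon hζ1
    have hla : Real.log a < 0 := Real.log_neg ha0 ha1'
    have hlr : Real.log r < 0 := Real.log_neg hr0 hζ1
    have hlalr : Real.log a < Real.log r := Real.log_lt_log ha0 hcon
    set θ := Real.log r / Real.log a with hθ
    have hθ0 : 0 < θ := div_pos_of_neg_of_neg hlr hla
    have hθ1 : θ < 1 := by
      rw [hθ, div_lt_one_of_neg hla]
      exact hlalr
    have hrθ : a ^ θ = r := by
      rw [Real.rpow_def_of_pos ha0, hθ, mul_comm, div_mul_cancel₀ _ hla.ne,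
        Real.exp_log hr0]
    have hpow : ∀ n : ℕ, ((a : ℝ) ^ n) ^ θ = r ^ n := by
      intro n
      rw [← Real.rpow_natCast a n, ← Real.rpow_mul ha0.le, mul_comm,
        Real.rpow_mul ha0.le, hrθ, Real.rpow_natCast]
    have hS0 : (0:ℝ) < a ^ κ := pow_pos ha0 κ
    have hS1 : (a:ℝ) ^ κ ≠ 1 := by
      have : (a:ℝ) ^ κ < 1 := pow_lt_one₀ ha0.le ha1' (by omega)
      exact this.ne
    have key := aux_jensen hnn hsum ha0.le hθ0 hθ1 hSa hS0 hS1 h0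
    have hsum_eq : ∑' n, h n * r ^ n = ∑' n, h n * ((a:ℝ) ^ n) ^ θ := by
      congr 1
      funext n
      rw [hpow n]
    have : r ^ κ < r ^ κ := by
      calc r ^ κ ≤ ∑' n, h n * r ^ n := hnormH
        _ = ∑' n, h n * ((a:ℝ) ^ n) ^ θ := hsum_eq
        _ < ((a:ℝ) ^ κ) ^ θ := key
        _ = r ^ κ := hpow κ
    exact lt_irrefl _ this
  refine ⟨hr0, hra, ?_⟩
  -- part C
  intro hreq
  have haC : (a : ℂ) ≠ 0 := by
    exact_mod_cast ha0.ne'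
  set c := ζ ^ κ with hc_def
  have hcn : ‖c‖ = a ^ κ := by rw [hc_def, norm_pow, ← hr, hreq]
  have hHS : HasSum (fun n => (h n : ℂ) * ζ ^ n) c := by
    have := (hSC ζ hζ1.le).hasSum
    rwa [← hH ζ, hζz] at this
  have hg0 : HasSum
      (fun n => h n * a ^ n * a ^ κ - ((h n : ℂ) * ζ ^ n * (starRingEnd ℂ) c).re) 0 := by
    have h1 : HasSum (fun n => h n * a ^ n * a ^ κ) (a ^ κ * a ^ κ) := hSa.mul_right _
    have h2 : HasSum (fun n => ((h n : ℂ) * ζ ^ n * (starRingEnd ℂ) c).re)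
        (a ^ κ * a ^ κ) := by
      have h3 := Complex.hasSum_re (hHS.mul_right ((starRingEnd ℂ) c))
      have h4 : (c * (starRingEnd ℂ) c).re = a ^ κ * a ^ κ := by
        rw [Complex.mul_conj]
        rw [Complex.ofReal_re, Complex.normSq_eq_norm_sq, hcn]
        ring
      rwa [h4] at h3
    simpa using h1.sub h2
  have hterm_nonneg : ∀ n,
      0 ≤ h n * a ^ n * a ^ κ - ((h n : ℂ) * ζ ^ n * (starRingEnd ℂ) c).re := by
    intro n
    have h1 : ((h n : ℂ) * ζ ^ n * (starRingEnd ℂ) c).re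
        ≤ ‖(h n : ℂ) * ζ ^ n * (starRingEnd ℂ) c‖ := Complex.re_le_norm _
    have h2 : ‖(h n : ℂ) * ζ ^ n * (starRingEnd ℂ) c‖ = h n * a ^ n * a ^ κ := by
      rw [norm_mul, norm_mul, Complex.norm_real, Real.norm_of_nonneg (hnn n),
        norm_pow, ← hr, hreq, RCLike.norm_conj, hcn]
    linarith
  have hterm_zero : ∀ n,
      h n * a ^ n * a ^ κ - ((h n : ℂ) * ζ ^ n * (starRingEnd ℂ) c).re = 0 := by
    intro n
    have hle := le_hasSum hg0 n (fun m _ => hterm_nonneg m)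
    linarith [hterm_nonneg n]
  have hzn : ∀ n : ℕ, h n ≠ 0 → ζ ^ n * (starRingEnd ℂ) c = (a : ℂ) ^ n * (a : ℂ) ^ κ := by
    intro n hn
    have h1 := hterm_zero n
    have hre : ((h n : ℂ) * ζ ^ n * (starRingEnd ℂ) c).re
        = h n * (ζ ^ n * (starRingEnd ℂ) c).re := by
      rw [mul_assoc, Complex.re_ofReal_mul]
    rw [hre] at h1
    have hre_eq : (ζ ^ n * (starRingEnd ℂ) c).re = a ^ n * a ^ κ := by
      have : h n * (a ^ n * a ^ κ) = h n * (ζ ^ n * (starRingEnd ℂ) c).re := by ring_nf; ring_nf at h1; linarith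
      exact (mul_left_cancel₀ hn this).symm
    have hnorm : ‖ζ ^ n * (starRingEnd ℂ) c‖ = a ^ n * a ^ κ := by
      rw [norm_mul, norm_pow, ← hr, hreq, RCLike.norm_conj, hcn]
    have heq := aux_re_eq_norm (z := ζ ^ n * (starRingEnd ℂ) c) (by rw [hre_eq, hnorm])
    rw [hre_eq] at heq
    rw [heq]
    push_cast
    ring
  have hcval : c = (a : ℂ) ^ κ := by
    have h1 := hzn 0 h0.ne'
    simp only [pow_zero, one_mul] at h1
    calc c = (starRingEnd ℂ) ((starRingEnd ℂ) c) := (Complex.conj_conj c).symm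
      _ = (starRingEnd ℂ) ((a : ℂ) ^ κ) := by rw [h1]
      _ = (a : ℂ) ^ κ := by rw [map_pow, Complex.conj_ofReal]
  have hζn : ∀ n : ℕ, h n ≠ 0 → ζ ^ n = (a : ℂ) ^ n := by
    intro n hn
    have h1 := hzn n hn
    rw [hcval, map_pow, Complex.conj_ofReal] at h1
    exact mul_right_cancel₀ (pow_ne_zero _ haC) h1
  set u := ζ / (a : ℂ) with hu
  have huκ : u ^ κ = 1 := by
    rw [hu, div_pow, ← hc_def, hcval, div_self (pow_ne_zero _ haC)]
  have hun : ∀ n : ℕ, h n ≠ 0 → u ^ n = 1 := by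
    intro n hn
    rw [hu, div_pow, hζn n hn, div_self (pow_ne_zero _ haC)]
  set d := orderOf u with hd
  have hdκ : d ∣ κ := orderOf_dvd_of_pow_eq_one huκ
  have hdpos : 0 < d := by
    rcases Nat.eq_zero_or_pos d with h1 | h1
    · exfalso
      rw [h1] at hdκ
      omega
    · exact h1
  have hud : u ^ d = 1 := pow_orderOf_eq_one u
  haveI : NeZero d := ⟨hdpos.ne'⟩
  obtain ⟨j, hjd, hju⟩ :=
    (Complex.isPrimitiveRoot_exp d hdpos.ne').eq_pow_of_pow_eq_one hud
  refine ⟨d, hdpos, hdκ, fun n hn => orderOf_dvd_of_pow_eq_one (hun n hn), j, by omega, ?_⟩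
  have hζu : ζ = (a : ℂ) * u := by
    rw [hu, mul_div_cancel₀ _ haC]
  rw [hζu, ← hju, ← Complex.exp_nat_mul]
  congr 1
  push_cast
  ring
end

section
/- If \kappa is even and h_n \neq 0 for at least one odd n, then |H(-1)| < 1, and H(s) - s^{\kappa} has an odd number of sign changes on the real interval (-1, 0); every such real negative zero lies in (-a, 0), where a is the smallest positive zero of H(s) - s^{\kappa}. -/
open Real Set

theorem stmt_12 (h : ℕ → ℝ) (hnn : ∀ k, 0 ≤ h k) (hsum : HasSum h 1)
    (h0 : 0 < h 0) (h01 : h 0 < 1)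
    (hodd : ∃ n : ℕ, Odd n ∧ 0 < h n)
    (κ : ℕ) (hκ : 1 ≤ κ) (hκeven : Even κ)
    (H : ℝ → ℝ) (hH : ∀ s : ℝ, H s = ∑' n : ℕ, h n * s ^ n)
    (a : ℝ) (ha : a ∈ Set.Ioc (0 : ℝ) 1)
    (haz : H a = a ^ κ)
    (hamin : ∀ t : ℝ, 0 < t → t < a → H t ≠ t ^ κ) :
    |H (-1)| < 1 ∧
    H (-1) - (-1 : ℝ) ^ κ < 0 ∧
    (∃ z ∈ Set.Ioo (-1 : ℝ) 0, H z = z ^ κ) ∧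
    (∀ z ∈ Set.Ioo (-1 : ℝ) 0, H z = z ^ κ → z ∈ Set.Ioo (-a) 0) := by
  obtain ⟨m, hmodd, hmpos⟩ := hodd
  obtain ⟨ha0, ha1⟩ := ha
  have hsum1 : ∑' n, h n = 1 := hsum.tsum_eq
  have hS : Summable h := hsum.summable
  -- summability of the series for |s| ≤ 1
  have hbound : ∀ s : ℝ, |s| ≤ 1 → ∀ n, ‖h n * s ^ n‖ ≤ h n := by
    intro s hs n
    rw [norm_mul, norm_pow, Real.norm_eq_abs, Real.norm_eq_abs, abs_of_nonneg (hnn n)]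
    exact mul_le_of_le_one_right (hnn n) (pow_le_one₀ (abs_nonneg s) hs)
  have hsummable : ∀ s : ℝ, |s| ≤ 1 → Summable (fun n => h n * s ^ n) := by
    intro s hs
    exact Summable.of_norm_bounded hS (hbound s hs)
  -- key strict bound: for z ∈ [-1, 0), |H z| < H (-z)
  have key : ∀ z : ℝ, -1 ≤ z → z < 0 → |H z| < H (-z) := by
    intro z hz1 hz0
    have hzn : |z| ≤ 1 := abs_le.2 ⟨hz1, by linarith⟩
    have htpos : (0:ℝ) < -z := by linarith
    have habs : |(-z)| ≤ 1 := by rw [abs_of_pos htpos]; linarith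
    have hSz := hsummable z hzn
    have hSt := hsummable (-z) habs
    have hle : ∀ n, h n * z ^ n ≤ h n * (-z) ^ n := by
      intro n
      have : z ^ n ≤ (-z) ^ n := by
        calc z ^ n ≤ |z ^ n| := le_abs_self _
        _ = |z| ^ n := by rw [abs_pow]
        _ = (-z) ^ n := by rw [abs_of_neg hz0]
      exact mul_le_mul_of_nonneg_left this (hnn n)
    have hle' : ∀ n, -(h n * (-z) ^ n) ≤ h n * z ^ n := by
      intro n
      have : -((-z) ^ n) ≤ z ^ n := by
        rw [neg_le]
        calc -(z ^ n) ≤ |z ^ n| := neg_le_abs _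
        _ = (-z) ^ n := by rw [abs_pow, abs_of_neg hz0]
      calc -(h n * (-z) ^ n) = h n * (-((-z)^n)) := by ring
      _ ≤ h n * z ^ n := mul_le_mul_of_nonneg_left this (hnn n)
    have h1 : ∑' n, h n * z ^ n < ∑' n, h n * (-z) ^ n := by
      refine Summable.tsum_lt_tsum hle (i := m) ?_ hSz hSt
      have hzm : z ^ m < 0 := Odd.pow_neg hmodd hz0
      have htm : 0 < (-z) ^ m := pow_pos htpos m
      nlinarith
    have h2 : -∑' n, h n * (-z) ^ n < ∑' n, h n * z ^ n := by
      rw [← tsum_neg]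
      refine Summable.tsum_lt_tsum hle' (i := 0) ?_ hSt.neg hSz
      simp only [pow_zero, mul_one]
      linarith
    rw [hH z, hH (-z), abs_lt]
    exact ⟨by linarith, h1⟩
  -- continuity of H on [-1, 1]
  have hcont : ContinuousOn H (Icc (-1 : ℝ) 1) := by
    have : ContinuousOn (fun s : ℝ => ∑' n, h n * s ^ n) (Icc (-1 : ℝ) 1) := by
      refine continuousOn_tsum (u := h) (fun n => ?_) hS (fun n x hx => ?_)
      · exact (continuous_const.mul (continuous_pow n)).continuousOn
      · exact hbound x (abs_le.2 ⟨hx.1, hx.2⟩) n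
    exact this.congr fun s _ => hH s
  have hH1 : H 1 = 1 := by
    rw [hH]; simpa using hsum1
  have habs1 : |H (-1)| < 1 := by
    have := key (-1) le_rfl (by norm_num)
    rwa [neg_neg, hH1] at this
  have hneg1 : H (-1) - (-1 : ℝ) ^ κ < 0 := by
    rw [hκeven.neg_pow, one_pow]
    have := (abs_lt.1 habs1).2
    linarith
  have hH0 : H 0 = h 0 := by
    rw [hH]
    rw [tsum_eq_single 0 (fun n hn => by simp [zero_pow hn])]
    simp
  refine ⟨habs1, hneg1, ?_, ?_⟩
  · -- existence of a zero in (-1, 0)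
    set f : ℝ → ℝ := fun s => H s - s ^ κ with hf
    have hfc : ContinuousOn f (Icc (-1 : ℝ) 0) := by
      refine ContinuousOn.sub (hcont.mono ?_) (continuous_pow κ).continuousOn
      exact Icc_subset_Icc le_rfl (by norm_num)
    have hf1 : f (-1) < 0 := hneg1
    have hf0 : 0 < f 0 := by
      simp only [hf, hH0, zero_pow (by omega : κ ≠ 0), sub_zero]
      exact h0
    have := intermediate_value_Ioo (by norm_num : (-1:ℝ) ≤ 0) hfc
      (Set.mem_Ioo.2 ⟨hf1, hf0⟩ : (0:ℝ) ∈ Ioo (f (-1)) (f 0))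
    obtain ⟨z, hz, hfz⟩ := this
    exact ⟨z, hz, by simpa [hf, sub_eq_zero] using hfz⟩
  · -- every zero in (-1,0) lies in (-a, 0)
    intro z hz hHz
    obtain ⟨hz1, hz0⟩ := hz
    refine ⟨?_, hz0⟩
    by_contra hcon
    push_neg at hcon
    -- so z ≤ -a, set t = -z ∈ [a, 1)
    set t : ℝ := -z with ht
    have hat : a ≤ t := by simp only [ht]; linarith
    have ht1 : t < 1 := by simp only [ht]; linarith
    have htpos : 0 < t := lt_of_lt_of_le ha0 hat
    have htk : t ^ κ = z ^ κ := by rw [ht, hκeven.neg_pow]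
    have hHznn : 0 ≤ H z := by rw [hHz, ← htk]; positivity
    have hlt : t ^ κ < H t := by
      have := key z hz1.le hz0
      rwa [abs_of_nonneg hHznn, hHz, ← htk, ← ht] at this
    -- now show H t ≤ t ^ κ, the desired contradiction
    rcases eq_or_lt_of_le hat with heq | hat'
    · rw [← heq, haz] at hlt; exact lt_irrefl _ hlt
    -- Hölder: t = a ^ μ with μ ∈ (0,1); H t ≤ 1^(1-μ) * (a^κ)^μ = t^κ
    have hloga : Real.log a < 0 := Real.log_neg ha0 (lt_of_le_of_lt hat ht1)
    have hlogt : Real.log t < 0 := Real.log_neg htpos ht1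
    have hlogat : Real.log a < Real.log t := Real.log_lt_log ha0 hat'
    set μ : ℝ := Real.log t / Real.log a with hμ
    have hμ0 : 0 < μ := div_pos_of_neg_of_neg hlogt hloga
    have hμ1 : μ < 1 := by
      rw [hμ, ← neg_div_neg_eq, div_lt_one (by linarith)]
      linarith
    have hta : t = a ^ μ := by
      rw [Real.rpow_def_of_pos ha0, hμ, mul_div_cancel₀ _ (ne_of_lt hloga)]
      exact (Real.exp_log htpos).symm
    have h1μ : (0:ℝ) < 1 - μ := by linarith
    have hμsum : (1 - μ) + μ = 1 := by ring
    set F : ℕ → ℝ := fun n => h n ^ (1 - μ) with hF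
    set G : ℕ → ℝ := fun n => (h n * a ^ n) ^ μ with hG
    have hFnn : ∀ n, 0 ≤ F n := fun n => Real.rpow_nonneg (hnn n) _
    have hGnn : ∀ n, 0 ≤ G n := fun n => Real.rpow_nonneg (mul_nonneg (hnn n) (by positivity)) _
    have hpq : (1/(1-μ)).HolderConjugate (1/μ) := by
      constructor
      · rw [one_div, one_div, inv_inv, inv_inv, inv_one]; linarith
      · exact one_div_pos.2 h1μ
      · exact one_div_pos.2 hμ0
    have hFp : ∀ n, F n ^ (1/(1-μ)) = h n := by
      intro n
      show (h n ^ (1 - μ)) ^ (1/(1-μ)) = h n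
      rw [← Real.rpow_mul (hnn n), mul_one_div, div_self (ne_of_gt h1μ), Real.rpow_one]
    have hGq : ∀ n, G n ^ (1/μ) = h n * a ^ n := by
      intro n
      show ((h n * a ^ n) ^ μ) ^ (1/μ) = h n * a ^ n
      rw [← Real.rpow_mul (mul_nonneg (hnn n) (by positivity)), mul_one_div,
        div_self (ne_of_gt hμ0), Real.rpow_one]
    have hFG : ∀ n, F n * G n = h n * t ^ n := by
      intro n
      show h n ^ (1 - μ) * (h n * a ^ n) ^ μ = h n * t ^ n
      rw [Real.mul_rpow (hnn n) (by positivity)]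
      have h1 : h n ^ (1-μ) * h n ^ μ = h n := by
        rw [← Real.rpow_add' (hnn n) (by rw [hμsum]; norm_num), hμsum, Real.rpow_one]
      have h2 : (a ^ n : ℝ) ^ μ = t ^ n := by
        rw [hta, ← Real.rpow_natCast a n, ← Real.rpow_mul ha0.le, mul_comm,
          Real.rpow_mul ha0.le, Real.rpow_natCast]
      calc h n ^ (1-μ) * (h n ^ μ * (a ^ n : ℝ) ^ μ)
          = (h n ^ (1-μ) * h n ^ μ) * (a ^ n : ℝ) ^ μ := by ring
        _ = h n * t ^ n := by rw [h1, h2]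
    have hFsum : Summable (fun n => F n ^ (1/(1-μ))) := hS.congr fun n => (hFp n).symm
    have hGsum : Summable (fun n => G n ^ (1/μ)) := by
      refine (hsummable a (by rw [abs_of_pos ha0]; exact ha1)).congr fun n => (hGq n).symm
    have holder := inner_le_Lp_mul_Lq_tsum_of_nonneg hpq hFnn hGnn hFsum hGsum
    have hmain : H t ≤ t ^ κ := by
      have hL : ∑' n, F n * G n = H t := by
        rw [hH t]; exact tsum_congr hFG
      have hR1 : ∑' n, F n ^ (1/(1-μ)) = 1 := by
        rw [tsum_congr hFp, hsum1]
      have hR2 : ∑' n, G n ^ (1/μ) = a ^ κ := by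
        rw [tsum_congr hGq, ← hH a, haz]
      have h2 := holder
      rw [hL, hR1, hR2] at h2
      have e1 : (1:ℝ) / (1/(1-μ)) = 1 - μ := by
        rw [one_div_one_div]
      have e2 : (1:ℝ) / (1/μ) = μ := by rw [one_div_one_div]
      rw [e1, e2, Real.one_rpow, one_mul] at h2
      calc H t ≤ ((a:ℝ) ^ κ) ^ μ := h2
        _ = t ^ κ := by
          rw [hta, ← Real.rpow_natCast a κ, ← Real.rpow_mul ha0.le, mul_comm,
            Real.rpow_mul ha0.le, Real.rpow_natCast]
    linarith
end

section
/- Let f be continuous on the closure of a convex open set D \subset \mathbb{C} and (n+k+1)-times continuously differentiable on the intersection of the closure of D with a convex open neighborhood U of a boundary point \zeta. If f(\zeta) = f'(\zeta) = \cdots = f^{(n)}(\zeta) = 0, then q(s) = f(s)/(s-\zeta)^{n+1} and its derivatives up to order k extend continuously to U \cap \overline{D}; in particular lim_{s \to \zeta, s \in \overline{D}} f(s)/(s-\zeta)^{n+1} = f^{(n+1)}(\zeta)/(n+1)!. -/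
open Set MeasureTheory Filter

noncomputable section

namespace Stmt14Aux

/-- Promote real unique differentiability to complex. -/
lemma uniqueDiffOn_complex {S : Set ℂ} (h : UniqueDiffOn ℝ S) : UniqueDiffOn ℂ S := by
  intro x hx
  obtain ⟨hdense, hmem⟩ := h x hx
  refine ⟨?_, hmem⟩
  have hsub : tangentConeAt ℝ S x ⊆ tangentConeAt ℂ S x := by
    exact tangentConeAt_mono_field
  apply hdense.mono
  calc (Submodule.span ℝ (tangentConeAt ℝ S x) : Set ℂ)
      ⊆ (Submodule.span ℂ (tangentConeAt ℝ S x) : Set ℂ) := Submodule.span_subset_span ℝ ℂ _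
    _ ⊆ (Submodule.span ℂ (tangentConeAt ℂ S x) : Set ℂ) := Submodule.span_mono hsub

/-- The segment parametrization from `ζ` to `s`. -/
def lseg (ζ s : ℂ) (t : ℝ) : ℂ := ζ + (t : ℂ) * (s - ζ)

lemma lseg_cont {ζ s : ℂ} : Continuous (lseg ζ s) := by unfold lseg; fun_prop

lemma lseg_zero (ζ s : ℂ) : lseg ζ s 0 = ζ := by simp [lseg]

lemma lseg_one (ζ s : ℂ) : lseg ζ s 1 = s := by simp [lseg]

lemma lseg_mem {S : Set ℂ} (hconv : Convex ℝ S) {ζ s : ℂ} (hζ : ζ ∈ S) (hs : s ∈ S)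
    {t : ℝ} (ht : t ∈ Icc (0:ℝ) 1) : lseg ζ s t ∈ S := by
  have h := hconv hζ hs (by linarith [ht.2] : (0:ℝ) ≤ 1 - t) ht.1 (by ring)
  convert h using 1
  simp only [lseg, Complex.real_smul]
  push_cast
  ring

/-- hypotheses bundle on the set `S` around the base point `ζ`. -/
def NiceAt (S : Set ℂ) (ζ : ℂ) : Prop :=
  Convex ℝ S ∧ ζ ∈ S ∧ UniqueDiffOn ℂ S ∧
    ∀ s₀ ∈ S, ∃ r > (0:ℝ), ∃ B : Set ℂ, IsCompact B ∧ Convex ℝ B ∧ s₀ ∈ B ∧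
      (S ∩ Metric.ball s₀ r ⊆ B) ∧ ∀ x ∈ B, ∀ t ∈ Icc (0:ℝ) 1, lseg ζ x t ∈ S

/-- The weighted averaging operator along segments from `ζ`. -/
def FF (ζ : ℂ) (w : ℝ → ℝ) (G : ℂ → ℂ) (s : ℂ) : ℂ :=
  ∫ t in (0:ℝ)..1, (w t : ℂ) * G (lseg ζ s t)

lemma integrable_aux {S : Set ℂ} (hconv : Convex ℝ S) {ζ : ℂ} (hζS : ζ ∈ S) {w : ℝ → ℝ}
    {G : ℂ → ℂ} {s : ℂ} (hw : Continuous w) (hG : ContinuousOn G S) (hs : s ∈ S) :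
    IntervalIntegrable (fun t => (w t : ℂ) * G (lseg ζ s t)) volume 0 1 := by
  apply ContinuousOn.intervalIntegrable
  rw [uIcc_of_le zero_le_one]
  exact ((Complex.continuous_ofReal.comp hw).continuousOn).mul
    (hG.comp lseg_cont.continuousOn (fun t ht => lseg_mem hconv hζS hs ht))

lemma hasDerivWithinAt_comp_line {S : Set ℂ} {G G' : ℂ → ℂ}
    (hG : ∀ x ∈ S, HasDerivWithinAt G (G' x) S x) {z₀ c : ℂ}
    (hmaps : ∀ v ∈ Icc (0:ℝ) 1, z₀ + (v:ℂ) * c ∈ S) {u : ℝ} (hu : u ∈ Icc (0:ℝ) 1) :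
    HasDerivWithinAt (fun v : ℝ => G (z₀ + (v:ℂ) * c)) (c * G' (z₀ + (u:ℂ) * c))
      (Icc (0:ℝ) 1) u := by
  have h1 : HasDerivAt (fun v : ℝ => (v:ℂ)) 1 u := by
    simpa using (hasDerivAt_id u).ofReal_comp
  have hinner : HasDerivWithinAt (fun v : ℝ => z₀ + (v:ℂ) * c) c (Icc (0:ℝ) 1) u := by
    simpa using (((h1.mul_const c).const_add z₀).hasDerivWithinAt (s := Icc (0:ℝ) 1))
  have houter := ((hG _ (hmaps u hu)).hasFDerivWithinAt).restrictScalars ℝ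
  have hcomp := houter.comp_hasDerivWithinAt u hinner (fun v hv => hmaps v hv)
  simpa [Function.comp_def, smul_eq_mul, mul_comm] using hcomp


lemma FF_cont {S : Set ℂ} {ζ : ℂ} (hN : NiceAt S ζ) {w : ℝ → ℝ} {G : ℂ → ℂ}
    (hw : Continuous w) (hwb : ∀ t ∈ Icc (0:ℝ) 1, |w t| ≤ 1) (hG : ContinuousOn G S) :
    ContinuousOn (FF ζ w G) S := by
  obtain ⟨hconv, hζS, hud, hK⟩ := hN
  intro s₀ hs₀
  obtain ⟨r, hr, B, hBcomp, hBconv, hs₀B, hball, hBmap⟩ := hK s₀ hs₀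
  set K : Set ℂ := (fun p : ℝ × ℂ => ζ + (p.1:ℂ) * (p.2 - ζ)) '' (Icc (0:ℝ) 1 ×ˢ B) with hKdef
  have hKcomp : IsCompact K := (isCompact_Icc.prod hBcomp).image (by fun_prop)
  have hKS : K ⊆ S := by
    rintro _ ⟨⟨t, x⟩, ⟨ht, hx⟩, rfl⟩
    exact hBmap x hx t ht
  have hKmem : ∀ x ∈ B, ∀ t ∈ Icc (0:ℝ) 1, lseg ζ x t ∈ K :=
    fun x hx t ht => ⟨(t, x), ⟨ht, hx⟩, rfl⟩
  have hGu := Metric.uniformContinuousOn_iff.mp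
    (hKcomp.uniformContinuousOn_of_continuous (hG.mono hKS))
  rw [Metric.continuousWithinAt_iff]
  intro ε hε
  obtain ⟨δ₀, hδ₀, hδ⟩ := hGu (ε/2) (by linarith)
  refine ⟨min δ₀ r, by positivity, fun s hs hdist => ?_⟩
  have hsB : s ∈ B := hball ⟨hs, by
    simpa [Metric.mem_ball] using lt_of_lt_of_le hdist (min_le_right _ _)⟩
  have h1 := integrable_aux hconv hζS hw hG hs
  have h2 := integrable_aux hconv hζS hw hG hs₀
  have hFsub : FF ζ w G s - FF ζ w G s₀
      = ∫ t in (0:ℝ)..1, (w t : ℂ) * (G (lseg ζ s t) - G (lseg ζ s₀ t)) := by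
    rw [FF, FF, ← intervalIntegral.integral_sub h1 h2]
    apply intervalIntegral.integral_congr
    intro t ht
    ring
  rw [dist_eq_norm, hFsub]
  have hb : ∀ t ∈ Set.uIoc (0:ℝ) 1, ‖(w t:ℂ) * (G (lseg ζ s t) - G (lseg ζ s₀ t))‖ ≤ ε/2 := by
    intro t ht
    have ht' : t ∈ Icc (0:ℝ) 1 := by
      rw [uIoc_of_le zero_le_one] at ht
      exact Ioc_subset_Icc_self ht
    have hd : dist (lseg ζ s t) (lseg ζ s₀ t) < δ₀ := by
      have he : dist (lseg ζ s t) (lseg ζ s₀ t) = |t| * dist s s₀ := by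
        rw [dist_eq_norm, dist_eq_norm]
        have : lseg ζ s t - lseg ζ s₀ t = (t:ℂ) * (s - s₀) := by simp [lseg]; ring
        rw [this, norm_mul, Complex.norm_real, Real.norm_eq_abs]
      rw [he]
      calc |t| * dist s s₀ ≤ 1 * dist s s₀ := by
            apply mul_le_mul_of_nonneg_right _ dist_nonneg
            rw [abs_le]; constructor <;> [linarith [ht'.1]; exact ht'.2]
        _ < δ₀ := by rw [one_mul]; exact lt_of_lt_of_le hdist (min_le_left _ _)
    have hGdist := hδ _ (hKmem s hsB t ht') _ (hKmem s₀ hs₀B t ht') hd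
    rw [dist_eq_norm] at hGdist
    rw [norm_mul, Complex.norm_real, Real.norm_eq_abs]
    calc |w t| * ‖G (lseg ζ s t) - G (lseg ζ s₀ t)‖ ≤ 1 * (ε/2) := by
          apply mul_le_mul (hwb t ht') hGdist.le (norm_nonneg _) zero_le_one
      _ = ε/2 := one_mul _
  calc ‖∫ t in (0:ℝ)..1, (w t:ℂ) * (G (lseg ζ s t) - G (lseg ζ s₀ t))‖
      ≤ (ε/2) * |1 - 0| := intervalIntegral.norm_integral_le_of_norm_le_const hb
    _ < ε := by rw [show |(1:ℝ) - 0| = 1 by norm_num]; linarith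


lemma FF_hasDeriv {S : Set ℂ} {ζ : ℂ} (hN : NiceAt S ζ) {w : ℝ → ℝ} {G G' : ℂ → ℂ}
    (hw : Continuous w) (hwb : ∀ t ∈ Icc (0:ℝ) 1, |w t| ≤ 1)
    (hGd : ∀ x ∈ S, HasDerivWithinAt G (G' x) S x) (hGc : ContinuousOn G S)
    (hG'c : ContinuousOn G' S) {s₀ : ℂ} (hs₀ : s₀ ∈ S) :
    HasDerivWithinAt (FF ζ w G) (FF ζ (fun t => t * w t) G' s₀) S s₀ := by
  obtain ⟨hconv, hζS, hud, hK⟩ := hN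
  obtain ⟨r, hr, B, hBcomp, hBconv, hs₀B, hball, hBmap⟩ := hK s₀ hs₀
  set K : Set ℂ := (fun p : ℝ × ℂ => ζ + (p.1:ℂ) * (p.2 - ζ)) '' (Icc (0:ℝ) 1 ×ˢ B) with hKdef
  have hKcomp : IsCompact K := (isCompact_Icc.prod hBcomp).image (by fun_prop)
  have hKS : K ⊆ S := by
    rintro _ ⟨⟨t, x⟩, ⟨ht, hx⟩, rfl⟩
    exact hBmap x hx t ht
  have hKmem : ∀ x ∈ B, ∀ t ∈ Icc (0:ℝ) 1, lseg ζ x t ∈ K :=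
    fun x hx t ht => ⟨(t, x), ⟨ht, hx⟩, rfl⟩
  have hG'u := Metric.uniformContinuousOn_iff.mp
    (hKcomp.uniformContinuousOn_of_continuous (hG'c.mono hKS))
  rw [hasDerivWithinAt_iff_isLittleO, Asymptotics.isLittleO_iff]
  intro c hc
  obtain ⟨δ₀, hδ₀, hδ⟩ := hG'u c hc
  have hmem : S ∩ Metric.ball s₀ (min δ₀ r) ∈ nhdsWithin s₀ S :=
    Filter.inter_mem self_mem_nhdsWithin
      (mem_nhdsWithin_of_mem_nhds (Metric.ball_mem_nhds _ (by positivity)))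
  filter_upwards [hmem] with s hs
  obtain ⟨hsS, hsball⟩ := hs
  have hsB : s ∈ B := hball ⟨hsS, Metric.ball_subset_ball (min_le_right _ _) hsball⟩
  have hdists : dist s s₀ < δ₀ :=
    lt_of_lt_of_le (Metric.mem_ball.mp hsball) (min_le_left _ _)
  -- pointwise mean value estimate
  have hEt : ∀ t ∈ Icc (0:ℝ) 1,
      ‖G (lseg ζ s t) - G (lseg ζ s₀ t) - (t:ℂ) * (s - s₀) * G' (lseg ζ s₀ t)‖
        ≤ (c * ‖s - s₀‖) * 1 := by
    intro t ht
    set z₀ : ℂ := lseg ζ s₀ t with hz₀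
    set cc : ℂ := (t:ℂ) * (s - s₀) with hcc
    have hyB : ∀ u ∈ Icc (0:ℝ) 1, lseg s₀ s u ∈ B :=
      fun u hu => lseg_mem hBconv hs₀B hsB hu
    have hline_eq : ∀ u : ℝ, z₀ + (u:ℂ) * cc = lseg ζ (lseg s₀ s u) t := by
      intro u
      simp only [hz₀, hcc, lseg]
      ring
    have hcurve_memK : ∀ u ∈ Icc (0:ℝ) 1, z₀ + (u:ℂ) * cc ∈ K := by
      intro u hu
      rw [hline_eq u]
      exact hKmem _ (hyB u hu) t ht
    have hcurve_mem : ∀ u ∈ Icc (0:ℝ) 1, z₀ + (u:ℂ) * cc ∈ S :=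
      fun u hu => hKS (hcurve_memK u hu)
    have hψ : ∀ u ∈ Icc (0:ℝ) 1,
        HasDerivWithinAt (fun u : ℝ => G (z₀ + (u:ℂ) * cc) - (u:ℂ) * (cc * G' z₀))
          (cc * G' (z₀ + (u:ℂ) * cc) - cc * G' z₀) (Icc (0:ℝ) 1) u := by
      intro u hu
      have h1 := hasDerivWithinAt_comp_line hGd hcurve_mem hu
      have h2 : HasDerivWithinAt (fun u : ℝ => (u:ℂ) * (cc * G' z₀)) (cc * G' z₀)
          (Icc (0:ℝ) 1) u := by
        have h3 : HasDerivAt (fun v : ℝ => (v:ℂ)) 1 u := by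
          simpa using (hasDerivAt_id u).ofReal_comp
        simpa using (h3.mul_const (cc * G' z₀)).hasDerivWithinAt (s := Icc (0:ℝ) 1)
      exact h1.sub h2
    have hbound : ∀ u ∈ Ico (0:ℝ) 1, ‖cc * G' (z₀ + (u:ℂ) * cc) - cc * G' z₀‖
        ≤ c * ‖s - s₀‖ := by
      intro u hu
      have hu' : u ∈ Icc (0:ℝ) 1 := Ico_subset_Icc_self hu
      rw [← mul_sub, norm_mul]
      have hz₀K : z₀ ∈ K := hKmem s₀ hs₀B t ht
      have hd : dist (z₀ + (u:ℂ) * cc) z₀ < δ₀ := by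
        rw [dist_eq_norm, add_sub_cancel_left, norm_mul, norm_mul, Complex.norm_real,
          Complex.norm_real, Real.norm_eq_abs, Real.norm_eq_abs]
        calc |u| * (|t| * ‖s - s₀‖) ≤ 1 * (1 * ‖s - s₀‖) := by
              apply mul_le_mul _ _ (by positivity) zero_le_one
              · rw [abs_le]; exact ⟨by linarith [hu'.1], hu'.2⟩
              · apply mul_le_mul_of_nonneg_right _ (norm_nonneg _)
                rw [abs_le]; exact ⟨by linarith [ht.1], ht.2⟩
          _ = ‖s - s₀‖ := by ring
          _ < δ₀ := by rwa [← dist_eq_norm]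
      have hGdist := hδ _ (hcurve_memK u hu') _ hz₀K hd
      rw [dist_eq_norm] at hGdist
      have hccle : ‖cc‖ ≤ ‖s - s₀‖ := by
        rw [hcc, norm_mul, Complex.norm_real, Real.norm_eq_abs]
        calc |t| * ‖s - s₀‖ ≤ 1 * ‖s - s₀‖ := by
              apply mul_le_mul_of_nonneg_right _ (norm_nonneg _)
              rw [abs_le]; exact ⟨by linarith [ht.1], ht.2⟩
          _ = ‖s - s₀‖ := one_mul _
      calc ‖cc‖ * ‖G' (z₀ + (u:ℂ) * cc) - G' z₀‖ ≤ ‖s - s₀‖ * c :=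
            mul_le_mul hccle hGdist.le (norm_nonneg _) (norm_nonneg _)
        _ = c * ‖s - s₀‖ := mul_comm _ _
    have hmvt := norm_image_sub_le_of_norm_deriv_le_segment' hψ hbound 1
      ⟨zero_le_one, le_refl (1:ℝ)⟩
    have he1 : z₀ + ((1:ℝ):ℂ) * cc = lseg ζ s t := by
      rw [hline_eq 1, lseg_one]
    have he0 : z₀ + ((0:ℝ):ℂ) * cc = z₀ := by push_cast; ring
    rw [he1] at hmvt
    simp only [he0, Complex.ofReal_zero, Complex.ofReal_one, zero_mul, one_mul, sub_zero,
      sub_sub_cancel, add_zero] at hmvt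
    calc ‖G (lseg ζ s t) - G (lseg ζ s₀ t) - (t:ℂ) * (s - s₀) * G' (lseg ζ s₀ t)‖
        = ‖G (lseg ζ s t) - cc * G' z₀ - G z₀‖ := by
          rw [hz₀, hcc]; congr 1; ring
      _ ≤ c * ‖s - s₀‖ * 1 := hmvt
      _ = (c * ‖s - s₀‖) * 1 := by ring
  -- assemble the integral estimate
  have h1 := integrable_aux hconv hζS hw hGc hsS
  have h2 := integrable_aux hconv hζS hw hGc hs₀
  have h3 : IntervalIntegrable (fun t => (s - s₀) * (((t * w t : ℝ) : ℂ) * G' (lseg ζ s₀ t)))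
      volume 0 1 :=
    (integrable_aux hconv hζS (by fun_prop) hG'c hs₀ (w := fun t => t * w t)).const_mul _
  have heq : FF ζ w G s - FF ζ w G s₀ - (s - s₀) • FF ζ (fun t => t * w t) G' s₀
      = ∫ t in (0:ℝ)..1,
          (w t : ℂ) * (G (lseg ζ s t) - G (lseg ζ s₀ t) - (t:ℂ) * (s - s₀) * G' (lseg ζ s₀ t)) := by
    rw [smul_eq_mul]
    unfold FF
    rw [← intervalIntegral.integral_const_mul, ← intervalIntegral.integral_sub h1 h2,
      ← intervalIntegral.integral_sub (h1.sub h2) h3]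
    apply intervalIntegral.integral_congr
    intro t ht
    push_cast
    ring
  rw [heq]
  calc ‖∫ t in (0:ℝ)..1,
        (w t : ℂ) * (G (lseg ζ s t) - G (lseg ζ s₀ t) - (t:ℂ) * (s - s₀) * G' (lseg ζ s₀ t))‖
      ≤ (c * ‖s - s₀‖) * |1 - 0| := by
        apply intervalIntegral.norm_integral_le_of_norm_le_const
        intro t ht
        have ht' : t ∈ Icc (0:ℝ) 1 := by
          rw [uIoc_of_le zero_le_one] at ht
          exact Ioc_subset_Icc_self ht
        rw [norm_mul, Complex.norm_real, Real.norm_eq_abs]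
        calc |w t| * ‖G (lseg ζ s t) - G (lseg ζ s₀ t) - (t:ℂ) * (s - s₀) * G' (lseg ζ s₀ t)‖
            ≤ 1 * ((c * ‖s - s₀‖) * 1) :=
              mul_le_mul (hwb t ht') (hEt t ht') (norm_nonneg _) zero_le_one
          _ = c * ‖s - s₀‖ := by ring
    _ = c * ‖s - s₀‖ := by rw [show |(1:ℝ) - 0| = 1 by norm_num, mul_one]


lemma FF_contDiff {S : Set ℂ} {ζ : ℂ} (hN : NiceAt S ζ) :
    ∀ (m : ℕ) (w : ℝ → ℝ) (G : ℂ → ℂ), Continuous w → (∀ t ∈ Icc (0:ℝ) 1, |w t| ≤ 1) →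
      ContDiffOn ℂ m G S → ContDiffOn ℂ m (FF ζ w G) S := by
  intro m
  induction m with
  | zero =>
    intro w G hw hwb hG
    rw [show ((0:ℕ) : WithTop ℕ∞) = 0 from rfl, contDiffOn_zero]
    exact FF_cont hN hw hwb (by rw [show ((0:ℕ) : WithTop ℕ∞) = 0 from rfl, contDiffOn_zero] at hG; exact hG)
  | succ m ih =>
    intro w G hw hwb hG
    have hud := hN.2.2.1
    have hle : (m : WithTop ℕ∞) + 1 ≤ ((m + 1 : ℕ) : WithTop ℕ∞) := by
      push_cast; exact le_rfl
    have hG' : ContDiffOn ℂ m (derivWithin G S) S := hG.derivWithin hud hle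
    have hGd : ∀ x ∈ S, HasDerivWithinAt G (derivWithin G S x) S x := by
      intro x hx
      have h1 : (1 : WithTop ℕ∞) ≤ ((m + 1 : ℕ) : WithTop ℕ∞) := by
        push_cast
        exact le_add_self
      exact ((hG.differentiableOn (by simp)) x hx).hasDerivWithinAt
    have hderiv : ∀ s ∈ S,
        HasDerivWithinAt (FF ζ w G) (FF ζ (fun t => t * w t) (derivWithin G S) s) S s :=
      fun s hs => FF_hasDeriv hN hw hwb hGd hG.continuousOn hG'.continuousOn hs
    rw [show ((m + 1 : ℕ) : WithTop ℕ∞) = (m : WithTop ℕ∞) + 1 by push_cast; rfl]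
    rw [contDiffOn_succ_iff_derivWithin hud]
    refine ⟨fun s hs => (hderiv s hs).differentiableWithinAt, ?_, ?_⟩
    · intro h
      exact absurd h (by simp)
    · have hw' : Continuous (fun t => t * w t) := by fun_prop
      have hwb' : ∀ t ∈ Icc (0:ℝ) 1, |t * w t| ≤ 1 := by
        intro t ht
        rw [abs_mul]
        calc |t| * |w t| ≤ 1 * 1 := by
              apply mul_le_mul _ (hwb t ht) (abs_nonneg _) zero_le_one
              rw [abs_le]; exact ⟨by linarith [ht.1], ht.2⟩
          _ = 1 := one_mul 1
      exact (ih (fun t => t * w t) (derivWithin G S) hw' hwb' hG').congr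
        (fun s hs => (hderiv s hs).derivWithin (hud s hs))

lemma ftc_line {S : Set ℂ} (hconv : Convex ℝ S) {ζ : ℂ} (hζS : ζ ∈ S) {H H' : ℂ → ℂ}
    (hH : ∀ x ∈ S, HasDerivWithinAt H (H' x) S x) (hHc : ContinuousOn H S)
    (hH'c : ContinuousOn H' S) {κ κ' : ℝ → ℝ} (hκ : ∀ t, HasDerivAt κ (κ' t) t)
    (hκ'c : Continuous κ') {s : ℂ} (hs : s ∈ S) :
    ((κ 1 : ℝ) : ℂ) * H s - ((κ 0 : ℝ) : ℂ) * H ζ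
      = (∫ t in (0:ℝ)..1, ((κ' t : ℝ) : ℂ) * H (lseg ζ s t))
        + (s - ζ) * ∫ t in (0:ℝ)..1, ((κ t : ℝ) : ℂ) * H' (lseg ζ s t) := by
  have hκc : Continuous κ := by
    rw [continuous_iff_continuousAt]
    exact fun x => (hκ x).continuousAt
  have hmaps : ∀ v ∈ Icc (0:ℝ) 1, lseg ζ s v ∈ S := fun v hv => lseg_mem hconv hζS hs hv
  have hmaps' : ∀ v ∈ Icc (0:ℝ) 1, ζ + (v:ℂ) * (s - ζ) ∈ S := hmaps
  have hint1 : IntervalIntegrable (fun t => ((κ' t : ℝ) : ℂ) * H (lseg ζ s t)) volume 0 1 :=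
    integrable_aux hconv hζS hκ'c hHc hs
  have hint2 : IntervalIntegrable (fun t => ((κ t : ℝ) : ℂ) * ((s - ζ) * H' (lseg ζ s t)))
      volume 0 1 := by
    apply ContinuousOn.intervalIntegrable
    rw [uIcc_of_le zero_le_one]
    exact ((Complex.continuous_ofReal.comp hκc).continuousOn).mul
      (continuousOn_const.mul (hH'c.comp lseg_cont.continuousOn hmaps))
  have hcont : ContinuousOn (fun t : ℝ => ((κ t : ℝ):ℂ) * H (lseg ζ s t)) (Icc 0 1) :=
    ((Complex.continuous_ofReal.comp hκc).continuousOn).mul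
      (hHc.comp lseg_cont.continuousOn hmaps)
  have hder : ∀ t ∈ Ioo (0:ℝ) 1,
      HasDerivWithinAt (fun t : ℝ => ((κ t : ℝ):ℂ) * H (lseg ζ s t))
        (((κ' t : ℝ):ℂ) * H (lseg ζ s t) + ((κ t : ℝ):ℂ) * ((s - ζ) * H' (lseg ζ s t)))
        (Ioi t) t := by
    intro t ht
    have hκd : HasDerivWithinAt (fun t : ℝ => ((κ t : ℝ):ℂ)) (((κ' t : ℝ):ℂ))
        (Icc (0:ℝ) 1) t := ((hκ t).ofReal_comp).hasDerivWithinAt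
    have hc := hasDerivWithinAt_comp_line hH hmaps' (Ioo_subset_Icc_self ht)
    have hprod := hκd.mul hc
    exact hprod.mono_of_mem_nhdsWithin (Icc_mem_nhdsGT_of_mem ⟨ht.1.le, ht.2⟩)
  have key := intervalIntegral.integral_eq_sub_of_hasDeriv_right_of_le zero_le_one hcont hder
    (hint1.add hint2)
  rw [intervalIntegral.integral_add hint1 hint2, lseg_one, lseg_zero] at key
  have hB : (∫ t in (0:ℝ)..1, ((κ t : ℝ):ℂ) * ((s - ζ) * H' (lseg ζ s t)))
      = (s - ζ) * ∫ t in (0:ℝ)..1, ((κ t : ℝ):ℂ) * H' (lseg ζ s t) := by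
    rw [← intervalIntegral.integral_const_mul]
    apply intervalIntegral.integral_congr
    intro t ht
    ring
  rw [hB] at key
  exact key.symm

end Stmt14Aux


open Stmt14Aux intervalIntegral
theorem stmt_14 (n k : ℕ) (D : Set ℂ) (hD : IsOpen D) (hDconv : Convex ℝ D)
    (hDne : D.Nonempty) (ζ : ℂ) (hζ : ζ ∈ frontier D)
    (U : Set ℂ) (hU : IsOpen U) (hUconv : Convex ℝ U) (hζU : ζ ∈ U)
    (f : ℂ → ℂ) (hfc : ContinuousOn f (closure D))
    (hf : ContDiffOn ℂ (n + k + 1) f (U ∩ closure D))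
    (hvan : ∀ j ≤ n, iteratedDerivWithin j f (U ∩ closure D) ζ = 0) :
    ∃ q : ℂ → ℂ,
      (∀ s ∈ U ∩ closure D, s ≠ ζ → q s = f s / (s - ζ) ^ (n + 1)) ∧
      ContDiffOn ℂ k q (U ∩ closure D) ∧
      q ζ = iteratedDerivWithin (n + 1) f (U ∩ closure D) ζ / ((n + 1).factorial) ∧
      Filter.Tendsto (fun s : ℂ => f s / (s - ζ) ^ (n + 1))
        (nhdsWithin ζ ((U ∩ closure D) \ {ζ}))
        (nhds (iteratedDerivWithin (n + 1) f (U ∩ closure D) ζ / ((n + 1).factorial))) := by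
  classical
  set S : Set ℂ := U ∩ closure D with hSdef
  have hζD : ζ ∈ closure D := frontier_subset_closure hζ
  have hζS : ζ ∈ S := ⟨hζU, hζD⟩
  have hconv : Convex ℝ S := hUconv.inter hDconv.closure
  have hint : (interior S).Nonempty := by
    obtain ⟨p, hpU, hpD⟩ : (U ∩ D).Nonempty := mem_closure_iff.mp hζD U hU hζU
    have hsub : U ∩ D ⊆ S := fun x hx => ⟨hx.1, subset_closure hx.2⟩
    exact ⟨p, interior_maximal hsub (hU.inter hD) ⟨hpU, hpD⟩⟩
  have hud : UniqueDiffOn ℂ S := uniqueDiffOn_complex (uniqueDiffOn_convex hconv hint)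
  have hN : NiceAt S ζ := by
    refine ⟨hconv, hζS, hud, ?_⟩
    intro s₀ hs₀
    obtain ⟨ε, hε, hball⟩ := Metric.isOpen_iff.mp hU s₀ hs₀.1
    refine ⟨ε/2, by linarith, Metric.closedBall s₀ (ε/2) ∩ closure D,
      (isCompact_closedBall _ _).inter_right isClosed_closure,
      (convex_closedBall _ _).inter hDconv.closure,
      ⟨Metric.mem_closedBall_self (by linarith), hs₀.2⟩, ?_, ?_⟩
    · rintro x ⟨⟨_, hx2⟩, hxb⟩
      exact ⟨Metric.ball_subset_closedBall hxb, hx2⟩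
    · rintro x ⟨hx1, hx2⟩ t ht
      have hxU : x ∈ U := hball (Metric.closedBall_subset_ball (by linarith) hx1)
      exact ⟨lseg_mem hUconv hζU hxU ht, lseg_mem hDconv.closure hζD hx2 ht⟩
  set Gi : ℕ → ℂ → ℂ := fun j => iteratedDerivWithin j f S with hGidef
  have hGsmooth : ∀ j m : ℕ, j + m ≤ n + k + 1 → ContDiffOn ℂ m (Gi j) S := by
    intro j
    induction j with
    | zero =>
      intro m hm
      have h0 : ContDiffOn ℂ m f S := hf.of_le (by exact_mod_cast show m ≤ n + k + 1 by omega)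
      exact h0.congr (fun x hx => by simp [hGidef])
    | succ j ih =>
      intro m hm
      have h1 : ContDiffOn ℂ (m + 1 : ℕ) (Gi j) S := ih (m+1) (by omega)
      have h2 : ContDiffOn ℂ m (derivWithin (Gi j) S) S :=
        h1.derivWithin hud (by push_cast; exact le_rfl)
      exact h2.congr (fun x hx => congrFun (iteratedDerivWithin_succ (n := j) (f := f) (s := S)) x)
  have hGd : ∀ j : ℕ, j + 1 ≤ n + k + 1 → ∀ x ∈ S,
      HasDerivWithinAt (Gi j) (Gi (j+1) x) S x := by
    intro j hj x hx
    have h1 : ContDiffOn ℂ (1:ℕ) (Gi j) S := hGsmooth j 1 hj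
    have h2 : DifferentiableWithinAt ℂ (Gi j) S x :=
      (h1.differentiableOn (by simp)) x hx
    have h3 := h2.hasDerivWithinAt
    rwa [show derivWithin (Gi j) S x = Gi (j+1) x from (congrFun (iteratedDerivWithin_succ (n := j) (f := f) (s := S)) x).symm] at h3
  have hGc : ∀ j : ℕ, j ≤ n + k + 1 → ContinuousOn (Gi j) S :=
    fun j hj => (hGsmooth j 0 (by omega)).continuousOn
  set w : ℕ → ℝ → ℝ := fun j t => (1 - t)^j / (j.factorial : ℝ) with hwdef
  have hwcont : ∀ j, Continuous (w j) :=
    fun j => ((continuous_const.sub continuous_id).pow j).div_const _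
  have hwb : ∀ j, ∀ t ∈ Icc (0:ℝ) 1, |w j t| ≤ 1 := by
    intro j t ht
    simp only [hwdef, abs_div, abs_pow]
    have h1 : |1 - t| ≤ 1 := by rw [abs_le]; constructor <;> [linarith [ht.2]; linarith [ht.1]]
    have h2 : |1 - t|^j ≤ 1 := pow_le_one₀ (abs_nonneg _) h1
    have h3 : (1:ℝ) ≤ |(j.factorial : ℝ)| := by
      rw [abs_of_pos (by positivity)]
      exact_mod_cast j.factorial_pos
    rw [div_le_one (by positivity)]
    exact h2.trans h3
  set R : ℕ → ℂ → ℂ := fun j => FF ζ (w j) (Gi (j+1)) with hRdef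
  -- step 0
  have hstep0 : ∀ s ∈ S, f s = f ζ + (s - ζ) * R 0 s := by
    intro s hs
    have hκ : ∀ t : ℝ, HasDerivAt (fun _ : ℝ => (1:ℝ)) ((fun _ : ℝ => (0:ℝ)) t) t :=
      fun t => hasDerivAt_const t 1
    have h := ftc_line hconv hζS (hGd 0 (by omega)) (hGc 0 (by omega)) (hGc 1 (by omega))
      hκ continuous_const hs
    simp only [Complex.ofReal_zero, Complex.ofReal_one, zero_mul, one_mul,
      intervalIntegral.integral_zero, zero_add] at h
    have hR0 : (∫ t in (0:ℝ)..1, Gi 1 (lseg ζ s t)) = R 0 s := by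
      rw [hRdef]
      simp only [FF]
      apply intervalIntegral.integral_congr
      intro t ht
      simp [hwdef]
    rw [hR0] at h
    have hf0 : ∀ x, Gi 0 x = f x := fun x => by simp [hGidef]
    rw [hf0, hf0] at h
    linear_combination h
  -- step j
  have hstepj : ∀ j : ℕ, j + 2 ≤ n + k + 1 → ∀ s ∈ S,
      R j s = Gi (j+1) ζ / (((j+1).factorial : ℕ) : ℂ) + (s - ζ) * R (j+1) s := by
    intro j hj s hs
    set κ : ℝ → ℝ := fun t => -((1 - t)^(j+1)) / (((j+1).factorial : ℕ) : ℝ) with hκdef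
    have hκ : ∀ t : ℝ, HasDerivAt κ (w j t) t := by
      intro t
      have h1 : HasDerivAt (fun t : ℝ => 1 - t) (-1) t := by
        simpa using (hasDerivAt_id t).const_sub 1
      have h2 := h1.pow (j+1)
      have h3 := (h2.neg).div_const (((j+1).factorial : ℕ) : ℝ)
      refine h3.congr_deriv ?_
      simp only [hwdef]
      rw [Nat.factorial_succ]
      have hfj : ((j.factorial : ℕ) : ℝ) ≠ 0 := by positivity
      push_cast
      field_simp
    have h := ftc_line hconv hζS (hGd (j+1) (by omega)) (hGc (j+1) (by omega))
      (hGc (j+2) (by omega)) hκ (hwcont j) hs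
    have hκ1 : κ 1 = 0 := by simp [hκdef]
    have hκ0 : κ 0 = -(((j+1).factorial : ℕ) : ℝ)⁻¹ := by
      simp [hκdef]
      ring
    have hRj : (∫ t in (0:ℝ)..1, ((w j t : ℝ) : ℂ) * Gi (j+1) (lseg ζ s t)) = R j s := rfl
    have hRj1 : (∫ t in (0:ℝ)..1, ((κ t : ℝ) : ℂ) * Gi (j+2) (lseg ζ s t)) = - R (j+1) s := by
      rw [hRdef]
      simp only [FF]
      rw [← intervalIntegral.integral_neg]
      apply intervalIntegral.integral_congr
      intro t ht
      simp only [hκdef, hwdef]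
      push_cast
      ring
    rw [hκ1, hκ0, hRj, hRj1] at h
    have hfj1 : ((((j+1).factorial : ℕ) : ℂ)) ≠ 0 := by
      exact_mod_cast (j+1).factorial_ne_zero
    push_cast at h ⊢
    field_simp at h ⊢
    linear_combination -h
  -- main chain
  have hkey : ∀ j, j ≤ n → ∀ s ∈ S, f s = (s - ζ)^(j+1) * R j s := by
    intro j
    induction j with
    | zero =>
      intro _ s hs
      have h0 := hstep0 s hs
      have hfζ : f ζ = 0 := by
        have := hvan 0 (Nat.zero_le n)
        simpa using this
      rw [h0, hfζ, pow_one, zero_add]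
    | succ j ih =>
      intro hj s hs
      have h1 := ih (by omega) s hs
      have h2 := hstepj j (by omega) s hs
      have h3 : Gi (j+1) ζ = 0 := hvan (j+1) hj
      rw [h2, h3] at h1
      rw [h1]
      push_cast
      ring
  -- value at ζ
  have hqζ : R n ζ = Gi (n+1) ζ / (((n+1).factorial : ℕ) : ℂ) := by
    have h1 : ∀ t : ℝ, lseg ζ ζ t = ζ := fun t => by simp [lseg]
    rw [hRdef]
    simp only [FF, h1]
    rw [intervalIntegral.integral_mul_const, intervalIntegral.integral_ofReal]
    have h2 : ∫ t in (0:ℝ)..1, w n t = (((n+1).factorial : ℕ) : ℝ)⁻¹ := by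
      simp only [hwdef]
      rw [intervalIntegral.integral_div]
      have h3 : (∫ t in (0:ℝ)..1, (1-t)^n) = 1/(n+1 : ℝ) := by
        have h4 := intervalIntegral.integral_comp_sub_left (a := (0:ℝ)) (b := 1)
          (fun x : ℝ => x^n) 1
        simp only [sub_zero, sub_self] at h4
        rw [show (fun t : ℝ => (1-t)^n) = (fun t : ℝ => ((fun x : ℝ => x^n) (1 - t))) from rfl]
        rw [h4, integral_pow]
        norm_num
      rw [h3, Nat.factorial_succ]
      have hfn : ((n.factorial : ℕ) : ℝ) ≠ 0 := by positivity
      push_cast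
      field_simp
    rw [h2]
    push_cast
    rw [div_eq_mul_inv, mul_comm]
  have hq_cd : ContDiffOn ℂ k (R n) S :=
    FF_contDiff hN k (w n) (Gi (n+1)) (hwcont n) (hwb n) (hGsmooth (n+1) k (by omega))
  have hmatch : ∀ s ∈ S, s ≠ ζ → R n s = f s / (s - ζ) ^ (n + 1) := by
    intro s hs hne
    rw [hkey n le_rfl s hs]
    rw [mul_comm, mul_div_assoc, div_self (pow_ne_zero _ (sub_ne_zero.mpr hne)), mul_one]
  have hqζ' : R n ζ = iteratedDerivWithin (n+1) f S ζ / (((n+1).factorial : ℕ) : ℂ) := hqζ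
  refine ⟨R n, hmatch, hq_cd, hqζ', ?_⟩
  have hcont : ContinuousWithinAt (R n) S ζ := hq_cd.continuousOn ζ hζS
  have h1 : Filter.Tendsto (R n) (nhdsWithin ζ (S \ {ζ})) (nhds (R n ζ)) :=
    hcont.tendsto.mono_left (nhdsWithin_mono ζ diff_subset)
  rw [show iteratedDerivWithin (n+1) f S ζ / (((n+1).factorial : ℕ) : ℂ) = R n ζ from hqζ'.symm]
  apply h1.congr'
  filter_upwards [self_mem_nhdsWithin] with s hs
  exact hmatch s hs.1 hs.2
end
end

section
/- If F is holomorphic on the open unit disk with Taylor coefficients f_n at 0, and the l-th derivative F^{(l)} extends continuously to the closed unit disk, then n!/(n-l)! \cdot f_n \to 0 as n \to \infty; in particular f_n = o(n^{-l}). -/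
open Complex Metric Filter MeasureTheory Set
open scoped Topology Real Nat NNReal ENNReal

private lemma aux_pow_le (l : ℕ) : ∀ n : ℕ, 2 * l ≤ n → n ^ l ≤ 2 ^ l * n.descFactorial l := by
  induction l with
  | zero => intro n _; simp
  | succ l ih =>
    intro n hn
    rw [pow_succ, pow_succ, Nat.descFactorial_succ]
    calc n ^ l * n ≤ (2 ^ l * n.descFactorial l) * (2 * (n - l)) :=
          Nat.mul_le_mul (ih n (by omega)) (by omega)
      _ = 2 ^ l * 2 * ((n - l) * n.descFactorial l) := by ring

private lemma aux_series {F : ℂ → ℂ} {f : ℕ → ℂ}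
    (hF : ∀ s : ℂ, ‖s‖ < 1 → HasSum (fun n : ℕ => f n * s ^ n) (F s)) :
    HasFPowerSeriesOnBall F (FormalMultilinearSeries.ofScalars ℂ f) 0 1 := by
  refine ⟨?_, one_pos, ?_⟩
  · refine ENNReal.le_of_forall_nnreal_lt fun r hr => ?_
    have hr1 : (r : ℝ) < 1 := by exact_mod_cast hr
    have h0 : ‖((r : ℝ) : ℂ)‖ < 1 := by
      simpa [Complex.norm_real, _root_.abs_of_nonneg r.coe_nonneg] using hr1
    have h2 : Tendsto (fun n => ‖f n * ((r : ℝ) : ℂ) ^ n‖) atTop (𝓝 0) := by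
      simpa using ((hF _ h0).summable).tendsto_atTop_zero.norm
    obtain ⟨C, hC⟩ := h2.bddAbove_range
    refine FormalMultilinearSeries.le_radius_of_bound _ C fun n => ?_
    have h3 := hC ⟨n, rfl⟩
    rw [FormalMultilinearSeries.ofScalars_norm]
    simpa [norm_mul, norm_pow, Complex.norm_real,
      _root_.abs_of_nonneg r.coe_nonneg] using h3
  · intro y hy
    rw [mem_emetric_ball_zero_iff] at hy
    have hy' : ‖y‖ < 1 := by
      rw [← ofReal_norm, ENNReal.ofReal_lt_one] at hy
      exact_mod_cast hy
    have := hF y hy'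
    simp only [FormalMultilinearSeries.ofScalars_apply_eq, smul_eq_mul, zero_add]
    exact this

theorem stmt_15 (F : ℂ → ℂ) (f : ℕ → ℂ)
    (hF : ∀ s : ℂ, ‖s‖ < 1 → HasSum (fun n : ℕ => f n * s ^ n) (F s))
    (l : ℕ) (g : ℂ → ℂ)
    (hgc : ContinuousOn g (Metric.closedBall (0 : ℂ) 1))
    (hg : ∀ s ∈ Metric.ball (0 : ℂ) 1, g s = iteratedDeriv l F s) :
    Filter.Tendsto (fun n : ℕ => (n.descFactorial l : ℂ) * f n) Filter.atTop (nhds 0) ∧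
    (fun n : ℕ => f n) =o[Filter.atTop] fun n : ℕ => ((n : ℝ) ^ l)⁻¹ := by
  have hπ : (0:ℝ) < 2 * π := by positivity
  haveI : Fact (0 < 2 * π) := ⟨hπ⟩
  set a : ℕ → ℂ := fun n => (n.descFactorial l : ℂ) * f n with ha
  have hFp := aux_series hF
  have hfn : ∀ n : ℕ, iteratedDeriv n F 0 = (n ! : ℂ) * f n := by
    intro n
    have h1 := hFp.factorial_smul (1:ℂ) n
    rw [← iteratedDeriv_eq_iteratedFDeriv] at h1
    rw [← h1, FormalMultilinearSeries.ofScalars_apply_eq]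
    simp [smul_eq_mul, nsmul_eq_mul]
  set G : ℂ → ℂ := iteratedDeriv l F with hGdef
  have hFanal : AnalyticOnNhd ℂ F (ball (0:ℂ) 1) := by
    intro z hz
    refine hFp.analyticAt_of_mem ?_
    rw [mem_emetric_ball_zero_iff, ← ofReal_norm, ENNReal.ofReal_lt_one]
    exact_mod_cast mem_ball_zero_iff.mp hz
  have hGanal : AnalyticOnNhd ℂ G (ball (0:ℂ) 1) := by
    have h2 := hFanal.iterated_deriv l
    rwa [hGdef, iteratedDeriv_eq_iterate]
  have hGdiff : DifferentiableOn ℂ G (ball (0:ℂ) 1) := hGanal.differentiableOn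
  set c : ℕ → ℂ := fun m => a (m + l) with hc
  have hGm : ∀ m : ℕ, iteratedDeriv m G 0 = (m ! : ℂ) * c m := by
    intro m
    have h2 : iteratedDeriv m G 0 = iteratedDeriv (m + l) F 0 := by
      simp only [hGdef, iteratedDeriv_eq_iterate]
      rw [← Function.iterate_add_apply]
    rw [h2, hfn]
    have h3 : (m + l)! = m ! * (m + l).descFactorial l := by
      rw [← Nat.factorial_mul_descFactorial (Nat.le_add_left l m), Nat.add_sub_cancel]
    rw [hc, ha]
    push_cast [h3]
    ring
  have hcoeff : ∀ r : ℝ≥0, 0 < r → (r : ℝ) < 1 → ∀ m : ℕ,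
      (cauchyPowerSeries G 0 r) m (fun _ => (1:ℂ)) = c m := by
    intro r hr0 hr1 m
    have hq : HasFPowerSeriesOnBall G (cauchyPowerSeries G 0 r) 0 r :=
      (hGdiff.mono (closedBall_subset_ball hr1)).hasFPowerSeriesOnBall hr0
    have h1 := hq.factorial_smul (1:ℂ) m
    rw [← iteratedDeriv_eq_iteratedFDeriv, hGm m, nsmul_eq_mul] at h1
    exact mul_left_cancel₀ (by exact_mod_cast m.factorial_ne_zero) h1
  have hJr : ∀ r : ℝ≥0, 0 < r → (r : ℝ) < 1 → ∀ m : ℕ,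
      (∫ θ in (0:ℝ)..2*π, Complex.exp (-(m:ℂ) * θ * I) * g (((r:ℝ):ℂ) * Complex.exp (θ * I)))
        = 2 * (π:ℂ) * ((r:ℝ):ℂ) ^ m * c m := by
    intro r hr0 hr1 m
    have hrr : (r:ℝ) ≠ 0 := by exact_mod_cast hr0.ne'
    have hrc : ((r:ℝ):ℂ) ≠ 0 := by exact_mod_cast hrr
    have h2 := (hcoeff r hr0 hr1 m).symm
    rw [cauchyPowerSeries_apply] at h2
    rw [circleIntegral] at h2
    have hint : ∀ θ : ℝ,
        deriv (circleMap 0 (r:ℝ)) θ • ((1 / (circleMap 0 (r:ℝ) θ - 0)) ^ m •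
          ((circleMap 0 (r:ℝ) θ - 0)⁻¹ • G (circleMap 0 (r:ℝ) θ)))
        = (I * (((r:ℝ):ℂ) ^ m)⁻¹) *
          (Complex.exp (-(m:ℂ) * θ * I) * g (((r:ℝ):ℂ) * Complex.exp (θ * I))) := by
      intro θ
      have he : Complex.exp ((θ:ℂ) * I) ≠ 0 := Complex.exp_ne_zero _
      have hmem : ((r:ℝ):ℂ) * Complex.exp ((θ:ℂ) * I) ∈ ball (0:ℂ) 1 := by
        rw [mem_ball_zero_iff, norm_mul]
        simp only [Complex.norm_exp_ofReal_mul_I, mul_one,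
          Complex.norm_real, Real.norm_eq_abs, _root_.abs_of_nonneg r.coe_nonneg]
        exact hr1
      have hpow : Complex.exp ((θ:ℂ) * I) ^ m = Complex.exp ((m:ℂ) * θ * I) := by
        rw [← Complex.exp_nat_mul]; ring_nf
      have hinv : Complex.exp (-(m:ℂ) * θ * I) = (Complex.exp ((m:ℂ) * θ * I))⁻¹ := by
        rw [← Complex.exp_neg]; ring_nf
      rw [deriv_circleMap]
      simp only [circleMap_zero, sub_zero, smul_eq_mul]
      rw [← (hg _ hmem), hinv, div_pow, one_pow, mul_pow, hpow]
      have hM : Complex.exp ((m:ℂ) * θ * I) ≠ 0 := Complex.exp_ne_zero _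
      field_simp
    rw [intervalIntegral.integral_congr (fun θ _ => hint θ),
      intervalIntegral.integral_const_mul, smul_eq_mul] at h2
    have hπc : ((π:ℝ):ℂ) ≠ 0 := by exact_mod_cast Real.pi_ne_zero
    rw [h2]
    generalize (∫ θ in (0:ℝ)..2*π, Complex.exp (-(m:ℂ) * θ * I) * g (((r:ℝ):ℂ) * Complex.exp (θ * I))) = J
    field_simp
  obtain ⟨C, hC⟩ : ∃ C : ℝ, ∀ z ∈ closedBall (0:ℂ) 1, ‖g z‖ ≤ C :=
    (isCompact_closedBall (0:ℂ) 1).exists_bound_of_continuousOn hgc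
  have hπc : ((π:ℝ):ℂ) ≠ 0 := by exact_mod_cast Real.pi_ne_zero
  have hmemc : ∀ (u : ℝ), |u| ≤ 1 → ∀ θ : ℝ, (u:ℂ) * Complex.exp ((θ:ℂ) * I) ∈ closedBall (0:ℂ) 1 := by
    intro u hu θ
    rw [mem_closedBall_zero_iff, norm_mul]
    simp only [Complex.norm_exp_ofReal_mul_I, mul_one, Complex.norm_real, Real.norm_eq_abs]
    exact hu
  have hexpnorm : ∀ (m : ℕ) (θ : ℝ), ‖Complex.exp (-(m:ℂ) * θ * I)‖ = 1 := by
    intro m θ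
    have h1 : -(m:ℂ) * θ * I = ((-(m * θ) : ℝ) : ℂ) * I := by push_cast; ring
    rw [h1]
    simp only [Complex.norm_exp_ofReal_mul_I]
  have hK1 : ∀ m : ℕ,
      (∫ θ in (0:ℝ)..2*π, Complex.exp (-(m:ℂ) * θ * I) * g (Complex.exp ((θ:ℂ) * I)))
        = 2 * (π:ℂ) * c m := by
    intro m
    have hIoo : Ioo (0:ℝ) 1 ∈ 𝓝[<] (1:ℝ) :=
      Ioo_mem_nhdsLT_of_mem (by constructor <;> norm_num)
    have hlim : Tendsto (fun r : ℝ => ∫ θ in (0:ℝ)..2*π,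
        Complex.exp (-(m:ℂ) * θ * I) * g ((r:ℂ) * Complex.exp ((θ:ℂ) * I))) (𝓝[<] (1:ℝ))
        (𝓝 (∫ θ in (0:ℝ)..2*π, Complex.exp (-(m:ℂ) * θ * I) * g (Complex.exp ((θ:ℂ) * I)))) := by
      apply intervalIntegral.tendsto_integral_filter_of_dominated_convergence
        (bound := fun _ => |C|)
      · filter_upwards [hIoo] with r hr
        apply Continuous.aestronglyMeasurable
        have hc1 : Continuous fun θ : ℝ => g ((r:ℂ) * Complex.exp ((θ:ℂ) * I)) := by
          apply hgc.comp_continuous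
          · fun_prop
          · exact fun θ => hmemc r (by rw [_root_.abs_of_nonneg hr.1.le]; exact hr.2.le) θ
        exact (Continuous.mul (by fun_prop) hc1)
      · filter_upwards [hIoo] with r hr
        refine Filter.Eventually.of_forall fun θ _ => ?_
        rw [norm_mul, hexpnorm, one_mul]
        exact le_trans (hC _ (hmemc r (by rw [_root_.abs_of_nonneg hr.1.le]; exact hr.2.le) θ))
          (le_abs_self C)
      · exact intervalIntegrable_const
      · refine Filter.Eventually.of_forall fun θ _ => ?_
        apply Tendsto.const_mul
        have hmem1 : Complex.exp ((θ:ℂ) * I) ∈ closedBall (0:ℂ) 1 := by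
          have := hmemc 1 (by norm_num) θ
          simpa using this
        have hgw : ContinuousWithinAt g (closedBall (0:ℂ) 1) (Complex.exp ((θ:ℂ) * I)) :=
          hgc _ hmem1
        have htend : Tendsto (fun r : ℝ => (r:ℂ) * Complex.exp ((θ:ℂ) * I)) (𝓝[<] (1:ℝ))
            (𝓝[closedBall (0:ℂ) 1] (Complex.exp ((θ:ℂ) * I))) := by
          apply tendsto_nhdsWithin_of_tendsto_nhds_of_eventually_within
          · have hcont : Continuous fun r : ℝ => (r:ℂ) * Complex.exp ((θ:ℂ) * I) := by fun_prop
            have := (hcont.tendsto 1).mono_left (nhdsWithin_le_nhds (s := Iio (1:ℝ)))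
            simpa using this
          · filter_upwards [hIoo] with r hr
            exact hmemc r (by rw [_root_.abs_of_nonneg hr.1.le]; exact hr.2.le) θ
        exact hgw.tendsto.comp htend
    have hlim2 : Tendsto (fun r : ℝ => ∫ θ in (0:ℝ)..2*π,
        Complex.exp (-(m:ℂ) * θ * I) * g ((r:ℂ) * Complex.exp ((θ:ℂ) * I))) (𝓝[<] (1:ℝ))
        (𝓝 (2 * (π:ℂ) * c m)) := by
      have hcont : Continuous fun r : ℝ => 2 * (π:ℂ) * (r:ℂ) ^ m * c m := by fun_prop
      have h3 : Tendsto (fun r : ℝ => 2 * (π:ℂ) * (r:ℂ) ^ m * c m) (𝓝[<] (1:ℝ))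
          (𝓝 (2 * (π:ℂ) * c m)) := by
        have := (hcont.tendsto 1).mono_left (nhdsWithin_le_nhds (s := Iio (1:ℝ)))
        simpa using this
      refine Filter.Tendsto.congr' ?_ h3
      filter_upwards [hIoo] with r hr
      have h4 := hJr ⟨r, hr.1.le⟩ (by exact_mod_cast hr.1) (by exact_mod_cast hr.2) m
      exact h4.symm
    exact tendsto_nhds_unique hlim hlim2
  set bd : ℝ → ℂ := fun θ => g (Complex.exp ((θ:ℂ) * I)) with hbdd
  have hbdcont : Continuous bd := by
    apply hgc.comp_continuous
    · fun_prop
    · intro θ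
      have := hmemc 1 (by norm_num) θ
      simpa using this
  have hper : bd 0 = bd (0 + 2*π) := by
    have h1 : (((0:ℝ)):ℂ) * I = 0 := by push_cast; ring
    have h2 : ((((0:ℝ) + 2*π :ℝ)):ℂ) * I = 2*(π:ℂ)*I := by push_cast; ring
    simp only [hbdd, h1, h2, Complex.exp_zero, Complex.exp_two_pi_mul_I]
  set ph : C(AddCircle (2*π), ℂ) :=
    ⟨AddCircle.liftIco (2*π) 0 bd, AddCircle.liftIco_continuous hper hbdcont.continuousOn⟩
    with hphi
  have hfour : ∀ m : ℕ, fourierCoeff (⇑ph) (m:ℤ) = c m := by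
    intro m
    have h1 := fourierCoeff_liftIco_eq (T := 2*π) (a := 0) bd (m:ℤ)
    have hval : ∀ x : ℝ, (fourier (-(m:ℤ)) (x : AddCircle ((0:ℝ)+2*π-0)) : ℂ)
        = Complex.exp (-(m:ℂ) * x * I) := by
      intro x
      rw [fourier_coe_apply]
      congr 1
      push_cast
      field_simp
      ring
    have h2 : (∫ x in (0:ℝ)..(0+2*π), (fourier (-(m:ℤ)) (x : AddCircle ((0:ℝ)+2*π-0)) : ℂ) • bd x)
        = 2*(π:ℂ) * c m := by
      rw [intervalIntegral.integral_congr
        (g := fun x : ℝ => Complex.exp (-(m:ℂ) * x * I) * bd x)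
        (fun x _ => by rw [hval x, smul_eq_mul])]
      rw [zero_add]
      exact hK1 m
    show fourierCoeff (AddCircle.liftIco (2*π) 0 bd) (m:ℤ) = c m
    rw [h1, fourierCoeffOn_eq_integral, h2]
    have h3 : ((0:ℝ)+2*π-0) = 2*π := by ring
    rw [h3, real_smul]
    push_cast
    rw [← mul_assoc]
    field_simp
  have hc0 : Tendsto c atTop (𝓝 0) := by
    set Φ := ContinuousMap.toLp (E := ℂ) 2 AddCircle.haarAddCircle ℂ ph with hPhi
    have hrepr : ∀ m : ℕ, fourierBasis.repr Φ (m:ℤ) = c m := by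
      intro m
      rw [fourierBasis_repr, fourierCoeff_toLp (T := 2*π) ph (m:ℤ)]
      exact hfour m
    have hmem := lp.memℓp (fourierBasis.repr Φ)
    rw [memℓp_gen_iff (by norm_num)] at hmem
    have h4 : Tendsto (fun i : ℤ => ‖fourierBasis.repr Φ i‖ ^ (2:ℝ≥0∞).toReal) cofinite
        (𝓝 0) := hmem.tendsto_cofinite_zero
    have h5 : Tendsto (fun m : ℕ => ‖fourierBasis.repr Φ ((m:ℤ))‖ ^ (2:ℝ≥0∞).toReal) atTop
        (𝓝 0) := by
      rw [← Nat.cofinite_eq_atTop]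
      exact h4.comp (Function.Injective.tendsto_cofinite (fun x y h => by exact_mod_cast h))
    simp only [hrepr] at h5
    have h5' : Tendsto (fun m : ℕ => ‖c m‖ ^ (2:ℕ)) atTop (𝓝 0) := by
      refine h5.congr fun m => ?_
      rw [show (2:ℝ≥0∞).toReal = ((2:ℕ):ℝ) by norm_num, Real.rpow_natCast]
    have h7 := (Real.continuous_sqrt.tendsto 0).comp h5'
    have h8 : Tendsto (fun m : ℕ => Real.sqrt (‖c m‖ ^ 2)) atTop (𝓝 0) := by
      simpa [Function.comp_def] using h7
    rw [tendsto_zero_iff_norm_tendsto_zero]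
    exact h8.congr fun m => Real.sqrt_sq (norm_nonneg _)
  have hA : Tendsto a atTop (𝓝 0) := by
    have h1 : Tendsto (fun n : ℕ => c (n - l)) atTop (𝓝 0) :=
      hc0.comp (tendsto_sub_atTop_nat l)
    refine Filter.Tendsto.congr' ?_ h1
    filter_upwards [eventually_ge_atTop l] with n hn
    simp only [hc]
    rw [Nat.sub_add_cancel hn]
  refine ⟨hA, ?_⟩
  rw [Asymptotics.isLittleO_iff]
  intro ε hε
  have h2 : Tendsto (fun n => ‖a n‖) atTop (𝓝 0) := by simpa using hA.norm
  have hev := h2.eventually_lt_const (show (0:ℝ) < ε / 2^l by positivity)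
  filter_upwards [hev, eventually_ge_atTop (2*l+1)] with n h3 h4
  have hn0 : (0:ℝ) < (n:ℝ) := by
    have h9 : (1:ℕ) ≤ n := by omega
    exact_mod_cast Nat.lt_of_lt_of_le Nat.zero_lt_one h9
  have hnl : (0:ℝ) < (n:ℝ)^l := by positivity
  rw [norm_inv, norm_pow, Real.norm_natCast, mul_comm ε, inv_mul_eq_div, le_div_iff₀ hnl]
  have h6 : ‖a n‖ = (n.descFactorial l : ℝ) * ‖f n‖ := by
    simp only [ha, norm_mul, Complex.norm_natCast]
  have key : (n:ℝ)^l * ‖f n‖ ≤ 2^l * ‖a n‖ := by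
    have h5 : ((n^l : ℕ) : ℝ) ≤ ((2^l * n.descFactorial l : ℕ) : ℝ) := by
      exact_mod_cast aux_pow_le l n (by omega)
    rw [h6]
    calc (n:ℝ)^l * ‖f n‖ ≤ ((2:ℝ)^l * (n.descFactorial l : ℝ)) * ‖f n‖ := by
          apply mul_le_mul_of_nonneg_right _ (norm_nonneg _)
          push_cast at h5
          exact h5
      _ = 2^l * ((n.descFactorial l:ℝ) * ‖f n‖) := by ring
  calc ‖f n‖ * (n:ℝ)^l = (n:ℝ)^l * ‖f n‖ := by ring
    _ ≤ 2^l * ‖a n‖ := key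
    _ ≤ 2^l * (ε / 2^l) := mul_le_mul_of_nonneg_left h3.le (by positivity)
    _ = ε := by field_simp
end

section
/- For the Bernoulli claim distribution with h_0 = q, h_1 = p = 1 - q, 0 < p < 1 and all other h_k = 0, the recurrence sequence satisfies x_n = (1 + (-1)^n q^{1-n})/(1+q) for all n \geq 0, and consequently D_n = h_0 (x_n x_{n+2} - x_{n+1}^2) = (-1)^n q^{-n}; in particular D_{2n} = q^{-2n} \geq 1 is nondecreasing and D_{2n+1} = -q^{-2n-1} \leq -1 is nonincreasing. -/
/-!
Since `h₁ = 1 - h₀`, the recurrence `q xₙ₊₂ = xₙ - (1 - q) xₙ₊₁` rearranges to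
`xₙ₊₁ + q xₙ₊₂ = xₙ + q xₙ₊₁`, so `xₙ + q xₙ₊₁ = x₀ + q x₁ = 1` for all `n`. This first-order
recurrence `(1 + q) xₙ₊₁ - 1 = -((1 + q) xₙ - 1) / q` gives the closed form at once, and
eliminating `xₙ₊₁, xₙ₊₂` with it gives `q² (xₙ xₙ₊₂ - xₙ₊₁²) = (1 + q) xₙ - 1 = (-1)ⁿ q^(1-n)`.
-/

open Finset

lemma sum_Icc_mul_eq_of_eq_zero {R : Type*} [Semiring R] {h x : ℕ → R}
    (hh : ∀ k, 2 ≤ k → h k = 0) (n : ℕ) :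
    ∑ i ∈ Icc 1 (n + 1), h (n + 2 - i) * x i = h 1 * x (n + 1) := by
  rw [sum_eq_single_of_mem (n + 1) (by simp)]
  · rw [show n + 2 - (n + 1) = 1 by omega]
  · intro i hi hne
    rw [hh _ (by grind), zero_mul]

section TwoTermRecurrence

variable {K : Type*} [Field K] {q : K} {x : ℕ → K}

lemma add_mul_succ_eq_one (hx0 : x 0 = 1) (hx1 : x 1 = 0)
    (hrec : ∀ n, q * x (n + 2) = x n - (1 - q) * x (n + 1)) (n : ℕ) :
    x n + q * x (n + 1) = 1 := by
  induction n with
  | zero => simp [hx0, hx1]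
  | succ n ih => linear_combination ih + hrec n

lemma one_add_mul_eq_of_add_mul_succ_eq_one (hq : q ≠ 0) (hx0 : x 0 = 1)
    (hinv : ∀ n, x n + q * x (n + 1) = 1) (n : ℕ) :
    (1 + q) * x n = 1 + (-1) ^ n * q ^ ((1 : ℤ) - n) := by
  induction n with
  | zero => simp [hx0]
  | succ n ih =>
    have hzpow : q ^ ((1 : ℤ) - n) = q * q ^ ((1 : ℤ) - (n + 1 : ℕ)) := by
      rw [← zpow_one_add₀ hq]
      push_cast
      ring_nf
    apply mul_left_cancel₀ hq
    rw [pow_succ]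
    linear_combination (1 + q) * hinv n - ih - (-1) ^ n * hzpow

lemma mul_mul_sub_sq_eq (h0 : x n + q * x (n + 1) = 1) (h1 : x (n + 1) + q * x (n + 2) = 1) :
    q * (q * (x n * x (n + 2) - x (n + 1) ^ 2)) = (1 + q) * x n - 1 := by
  linear_combination q * x n * h1 - (q * x (n + 1) + 1) * h0

lemma mul_sub_sq_eq_neg_one_pow_mul_zpow (hq : q ≠ 0) (hx0 : x 0 = 1)
    (hinv : ∀ n, x n + q * x (n + 1) = 1) (n : ℕ) :
    q * (x n * x (n + 2) - x (n + 1) ^ 2) = (-1) ^ n * q ^ (-(n : ℤ)) := by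
  apply mul_left_cancel₀ hq
  rw [mul_mul_sub_sq_eq (hinv n) (hinv (n + 1)),
    one_add_mul_eq_of_add_mul_succ_eq_one hq hx0 hinv, mul_left_comm, ← zpow_one_add₀ hq,
    ← sub_eq_add_neg]
  ring

end TwoTermRecurrence

theorem stmt_17 (p q : ℝ) (hp : 0 < p) (hp1 : p < 1) (hq : q = 1 - p)
    (h : ℕ → ℝ) (hh0 : h 0 = q) (hh1 : h 1 = p) (hhk : ∀ k, 2 ≤ k → h k = 0)
    (x : ℕ → ℝ) (hx0 : x 0 = 1) (hx1 : x 1 = 0)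
    (hrec : ∀ n, 2 ≤ n →
      x n = (1 / h 0) * (x (n - 2) - ∑ i ∈ Finset.Icc 1 (n - 1), h (n - i) * x i))
    (D : ℕ → ℝ) (hD : ∀ n, D n = h 0 * (x n * x (n + 2) - (x (n + 1)) ^ 2)) :
    (∀ n : ℕ, x n = (1 + (-1 : ℝ) ^ n * q ^ ((1 : ℤ) - n)) / (1 + q)) ∧
    (∀ n : ℕ, D n = (-1 : ℝ) ^ n * q ^ (-(n : ℤ))) ∧
    (∀ n : ℕ, 1 ≤ D (2 * n) ∧ D (2 * n) ≤ D (2 * n + 2) ∧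
      D (2 * n + 1) ≤ -1 ∧ D (2 * n + 3) ≤ D (2 * n + 1)) := by
  obtain rfl : p = 1 - q := by linarith
  have hq0 : 0 < q := by linarith
  have hq1 : q ≤ 1 := by linarith
  have hrec' (n : ℕ) : q * x (n + 2) = x n - (1 - q) * x (n + 1) := by
    have := hrec (n + 2) (by omega)
    rw [show n + 2 - 2 = n by omega, show n + 2 - 1 = n + 1 by omega,
      sum_Icc_mul_eq_of_eq_zero hhk, hh0, hh1] at this
    rw [this]
    field_simp
  have hinv := add_mul_succ_eq_one hx0 hx1 hrec'
  have hDn (n : ℕ) : D n = (-1) ^ n * q ^ (-(n : ℤ)) := by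
    rw [hD, hh0, mul_sub_sq_eq_neg_one_pow_mul_zpow hq0.ne' hx0 hinv]
  have hDeven (n : ℕ) : D (2 * n) = q ^ (-(2 * n : ℕ) : ℤ) := by
    rw [hDn, (even_two_mul n).neg_one_pow, one_mul]
  have hDodd (n : ℕ) : D (2 * n + 1) = -q ^ (-(2 * n + 1 : ℕ) : ℤ) := by
    rw [hDn, (odd_two_mul_add_one n).neg_one_pow, neg_one_mul]
  refine ⟨fun n ↦ ?_, hDn, fun n ↦ ⟨?_, ?_, ?_, ?_⟩⟩
  · rw [eq_div_iff (by positivity), mul_comm]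
    exact one_add_mul_eq_of_add_mul_succ_eq_one hq0.ne' hx0 hinv n
  · rw [hDeven]
    exact one_le_zpow_of_nonpos₀ hq0 hq1 (by omega)
  · rw [hDeven, show 2 * n + 2 = 2 * (n + 1) by ring, hDeven]
    exact zpow_le_zpow_right_of_le_one₀ hq0 hq1 (by omega)
  · rw [hDodd, neg_le_neg_iff]
    exact one_le_zpow_of_nonpos₀ hq0 hq1 (by omega)
  · rw [hDodd, show 2 * n + 3 = 2 * (n + 1) + 1 by ring, hDodd, neg_le_neg_iff]
    exact zpow_le_zpow_right_of_le_one₀ hq0 hq1 (by omega)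
end
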